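/- arXiv:2304.11588 — 9 statements merged into one kernel-verified Lean document; each statement's English description precedes it below -/
import Mathlib

section
/- For every y with 0 < y < 1, one has artanh(y)·log(artanh(y)) − y·log(y)/(1 − y²) > 0. -/
open Real Filter Set

noncomputable def artanh (y : ℝ) : ℝ := Real.log ((1 + y) / (1 - y)) / 2

lemma artanh_eq {y : ℝ} (h1 : -1 < y) (h2 : y < 1) :
    _root_.artanh y = (Real.log (1 + y) - Real.log (1 - y)) / 2 := by
  unfold _root_.artanh
  rw [Real.log_div (by linarith) (by linarith)]

lemma hasDerivAt_A {y : ℝ} (h1 : -1 < y) (h2 : y < 1) :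
    HasDerivAt (fun t => (Real.log (1 + t) - Real.log (1 - t)) / 2) (1 / (1 - y ^ 2)) y := by
  have h1' : (1:ℝ) + y ≠ 0 := by linarith
  have h2' : (1:ℝ) - y ≠ 0 := by linarith
  have d1 : HasDerivAt (fun t : ℝ => Real.log (1 + t)) (1 / (1 + y)) y := by
    have := (Real.hasDerivAt_log h1').comp y ((hasDerivAt_id y).const_add 1)
    simpa [Function.comp_def] using this
  have d2 : HasDerivAt (fun t : ℝ => Real.log (1 - t)) (-(1 / (1 - y))) y := by
    have := (Real.hasDerivAt_log h2').comp y ((hasDerivAt_id y).neg.const_add 1)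
    simpa [Function.comp_def] using this
  have := (d1.sub d2).div_const 2
  refine this.congr_deriv ?_
  have h3 : (1:ℝ) - y ^ 2 = (1 + y) * (1 - y) := by ring
  rw [h3]
  field_simp
  ring

lemma lt_A {y : ℝ} (hy0 : 0 < y) (hy1 : y < 1) :
    y < (Real.log (1 + y) - Real.log (1 - y)) / 2 := by
  set f : ℝ → ℝ := fun t => (Real.log (1 + t) - Real.log (1 - t)) / 2 - t with hf
  have hD : ∀ x ∈ Ico (0:ℝ) 1, HasDerivAt f (1 / (1 - x ^ 2) - 1) x := by
    intro x hx
    exact (hasDerivAt_A (by linarith [hx.1]) hx.2).sub (hasDerivAt_id x)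
  have hc : ContinuousOn f (Ico (0:ℝ) 1) :=
    fun x hx => (hD x hx).continuousAt.continuousWithinAt
  have hmono : StrictMonoOn f (Ico (0:ℝ) 1) := by
    apply strictMonoOn_of_deriv_pos (convex_Ico 0 1) hc
    intro x hx
    rw [interior_Ico] at hx
    rw [(hD x ⟨le_of_lt hx.1, hx.2⟩).deriv]
    have h2 : (0:ℝ) < 1 - x ^ 2 := by nlinarith [hx.1, hx.2]
    rw [lt_sub_iff_add_lt, zero_add, lt_div_iff₀ h2]
    nlinarith [hx.1, hx.2]
  have := hmono (by norm_num) (⟨le_of_lt hy0, hy1⟩ : y ∈ Ico (0:ℝ) 1) hy0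
  simp only [hf, Real.log_one] at this
  norm_num at this
  linarith

lemma mul_A_lt {y : ℝ} (hy0 : 0 < y) (hy1 : y < 1) :
    (1 - y ^ 2) * ((Real.log (1 + y) - Real.log (1 - y)) / 2) < y := by
  set A : ℝ → ℝ := fun t => (Real.log (1 + t) - Real.log (1 - t)) / 2 with hA
  set g : ℝ → ℝ := fun t => t - (1 - t ^ 2) * A t with hg
  have hD : ∀ x ∈ Ico (0:ℝ) 1, HasDerivAt g (2 * x * A x) x := by
    intro x hx
    have h2 : (1:ℝ) - x ^ 2 ≠ 0 := by nlinarith [hx.1, hx.2]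
    have dA := hasDerivAt_A (by linarith [hx.1]) hx.2
    have dq : HasDerivAt (fun t : ℝ => 1 - t ^ 2) (-(2 * x)) x := by
      have := ((hasDerivAt_pow 2 x).const_sub 1)
      simpa using this
    have := (hasDerivAt_id x).sub (dq.mul dA)
    refine this.congr_deriv ?_
    field_simp
    ring
  have hc : ContinuousOn g (Ico (0:ℝ) 1) :=
    fun x hx => (hD x hx).continuousAt.continuousWithinAt
  have hmono : StrictMonoOn g (Ico (0:ℝ) 1) := by
    apply strictMonoOn_of_deriv_pos (convex_Ico 0 1) hc
    intro x hx
    rw [interior_Ico] at hx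
    rw [(hD x ⟨le_of_lt hx.1, hx.2⟩).deriv]
    have hAx : x < A x := lt_A hx.1 hx.2
    have hA0 : 0 < A x := lt_trans hx.1 hAx
    have hx0 : 0 < x := hx.1
    positivity
  have := hmono (by norm_num) (⟨le_of_lt hy0, hy1⟩ : y ∈ Ico (0:ℝ) 1) hy0
  simp only [hg, hA, Real.log_one] at this
  norm_num at this
  linarith

theorem artanh_mul_log_sub_pos (y : ℝ) (hy0 : 0 < y) (hy1 : y < 1) :
    _root_.artanh y * Real.log (_root_.artanh y) - y * Real.log y / (1 - y ^ 2) > 0 := by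
  have hA := artanh_eq (by linarith) hy1
  set a := _root_.artanh y with ha
  have hya : y < a := by rw [hA]; exact lt_A hy0 hy1
  have ha0 : 0 < a := lt_trans hy0 hya
  have h2 : (0:ℝ) < 1 - y ^ 2 := by nlinarith
  have hlogy : Real.log y < 0 := Real.log_neg hy0 hy1
  rcases le_or_gt 1 a with h | h
  · have h1 : 0 ≤ a * Real.log a :=
      mul_nonneg (le_of_lt ha0) (Real.log_nonneg h)
    have h3 : y * Real.log y < 0 := mul_neg_of_pos_of_neg hy0 hlogy
    have : y * Real.log y / (1 - y ^ 2) < 0 := div_neg_of_neg_of_pos h3 h2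
    linarith
  · have hloga : Real.log a < 0 := Real.log_neg ha0 h
    have hlt : Real.log y < Real.log a := Real.log_lt_log hy0 hya
    have key1 : (1 - y ^ 2) * a < y := by rw [hA]; exact mul_A_lt hy0 hy1
    -- (1-y^2)*a*log a > y*log a  (multiplying by negative log a flips)
    have key2 : y * Real.log a < (1 - y ^ 2) * a * Real.log a := by
      nlinarith
    have key3 : y * Real.log y < y * Real.log a := by nlinarith
    have key : y * Real.log y < (1 - y ^ 2) * (a * Real.log a) := by nlinarith
    rw [gt_iff_lt, sub_pos, div_lt_iff₀ h2]
    nlinarith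
end

section
/- For every y with 0 < y < 1, one has (1 − y²)·log(artanh(y)) − (1 + y²)·log(y) > 0; equivalently, log(artanh(y))/log(y) < (1 + y²)/(1 − y²) for all 0 < y < 1. -/
open Real Filter Set

lemma log_ratio_gt (y : ℝ) (hy0 : 0 < y) (hy1 : y < 1) :
    2 * y < Real.log ((1 + y) / (1 - y)) := by
  have h1y : (0:ℝ) < 1 - y := by linarith
  set f : ℝ → ℝ := fun x => Real.log (1 + x) - Real.log (1 - x) - 2 * x with hf
  have hmono : StrictMonoOn f (Set.Ico 0 1) := by
    apply strictMonoOn_of_deriv_pos (convex_Ico 0 1)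
    · apply ContinuousOn.sub
      apply ContinuousOn.sub
      · exact (continuousOn_const.add continuousOn_id).log
          (fun x hx => by rcases hx with ⟨h0, _⟩; simp only [Pi.add_apply, id]; positivity)
      · exact (continuousOn_const.sub continuousOn_id).log
          (fun x hx => by rcases hx with ⟨_, h1⟩; simp only [Pi.sub_apply, id]; intro h; linarith)
      · exact continuousOn_const.mul continuousOn_id
    · rw [interior_Ico]
      intro x hx
      rcases hx with ⟨hx0, hx1⟩
      have ha : (0:ℝ) < 1 + x := by linarith
      have hb : (0:ℝ) < 1 - x := by linarith
      have d1 : HasDerivAt (fun x : ℝ => Real.log (1 + x)) ((1 + x)⁻¹) x := by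
        have := (Real.hasDerivAt_log ha.ne').comp x ((hasDerivAt_id x).const_add 1)
        simpa [Function.comp_def] using this
      have d2 : HasDerivAt (fun x : ℝ => Real.log (1 - x)) (-(1 - x)⁻¹) x := by
        have := (Real.hasDerivAt_log hb.ne').comp x ((hasDerivAt_id x).neg.const_add 1)
        simpa [sub_eq_add_neg, Function.comp_def] using this
      have d3 : HasDerivAt (fun x : ℝ => 2 * x) 2 x := by
        simpa using (hasDerivAt_id x).const_mul 2
      have hd : HasDerivAt f ((1 + x)⁻¹ - -(1 - x)⁻¹ - 2) x := (d1.sub d2).sub d3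
      rw [hd.deriv]
      have key : (1 + x) * (1 - x) < 1 := by nlinarith
      have e1 : (1 + x)⁻¹ - -(1 - x)⁻¹ - 2
          = (2 - 2 * ((1 + x) * (1 - x))) / ((1 + x) * (1 - x)) := by
        field_simp
        ring
      rw [e1]
      apply div_pos (by nlinarith) (by positivity)
  have h0 : f 0 = 0 := by simp [hf]
  have hy : f 0 < f y := hmono ⟨le_refl 0, by norm_num⟩ ⟨hy0.le, hy1⟩ hy0
  rw [h0] at hy
  have hlog : Real.log ((1 + y) / (1 - y)) = Real.log (1 + y) - Real.log (1 - y) :=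
    Real.log_div (by linarith) h1y.ne'
  rw [hlog]
  simp only [hf] at hy
  linarith

theorem log_artanh_ineq (y : ℝ) (hy0 : 0 < y) (hy1 : y < 1) :
    (1 - y ^ 2) * Real.log (_root_.artanh y) - (1 + y ^ 2) * Real.log y > 0 ∧
    Real.log (_root_.artanh y) / Real.log y < (1 + y ^ 2) / (1 - y ^ 2) := by
  have hA : y < _root_.artanh y := by
    have := log_ratio_gt y hy0 hy1
    unfold _root_.artanh
    linarith
  have hlogA : Real.log y < Real.log (_root_.artanh y) := Real.log_lt_log hy0 hA
  have hLy : Real.log y < 0 := Real.log_neg hy0 hy1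
  have hsq : (0:ℝ) < 1 - y ^ 2 := by nlinarith
  have h1 : (1 - y ^ 2) * Real.log (_root_.artanh y) - (1 + y ^ 2) * Real.log y > 0 := by
    nlinarith [mul_pos hsq (sub_pos.mpr hlogA), mul_pos (mul_pos (two_pos (α := ℝ)) (pow_pos hy0 2)) (neg_pos.mpr hLy)]
  refine ⟨h1, ?_⟩
  rw [div_lt_iff_of_neg hLy, div_mul_eq_mul_div, div_lt_iff₀ hsq]
  nlinarith
end

section
/- The function y ↦ log(artanh(y))/log(y) is strictly decreasing on the interval (0, 1), and it tends to 1 as y → 0+. -/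
open Real Filter Set Topology

lemma artanh_zero : _root_.artanh 0 = 0 := by simp [_root_.artanh]

lemma artanh_hasDerivAt {y : ℝ} (h1 : -1 < y) (h2 : y < 1) :
    HasDerivAt _root_.artanh (1 / (1 - y ^ 2)) y := by
  have hy1 : (0:ℝ) < 1 - y := by linarith
  have hy2 : (0:ℝ) < 1 + y := by linarith
  have hsq : (1:ℝ) - y ^ 2 ≠ 0 := by nlinarith
  have hq : HasDerivAt (fun y : ℝ => (1 + y) / (1 - y))
      (((0 + 1) * (1 - y) - (1 + y) * (0 - 1)) / (1 - y) ^ 2) y :=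
    (((hasDerivAt_const y (1:ℝ)).add (hasDerivAt_id y)).div
      ((hasDerivAt_const y (1:ℝ)).sub (hasDerivAt_id y)) hy1.ne')
  have hl := (Real.hasDerivAt_log (by positivity : (1 + y) / (1 - y) ≠ 0)).comp y hq
  have := hl.div_const 2
  refine this.congr_deriv ?_
  field_simp
  ring

lemma artanh_continuousAt {y : ℝ} (h1 : -1 < y) (h2 : y < 1) : ContinuousAt _root_.artanh y :=
  (artanh_hasDerivAt h1 h2).continuousAt

lemma lt_artanh {y : ℝ} (h0 : 0 < y) (h1 : y < 1) : y < _root_.artanh y := by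
  have hmono : StrictMonoOn (fun t => _root_.artanh t - t) (Ico 0 1) := by
    apply strictMonoOn_of_deriv_pos (convex_Ico 0 1)
    · intro t ht
      exact ((artanh_continuousAt (by linarith [ht.1]) ht.2).sub
        continuous_id.continuousAt).continuousWithinAt
    · intro t ht
      rw [interior_Ico] at ht
      have hd : HasDerivAt (fun t => _root_.artanh t - t) (1 / (1 - t ^ 2) - 1) t :=
        (artanh_hasDerivAt (by linarith [ht.1]) ht.2).sub (hasDerivAt_id t)
      rw [hd.deriv]
      have : (0:ℝ) < 1 - t ^ 2 := by nlinarith [ht.1, ht.2]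
      rw [sub_pos, lt_div_iff₀ this]
      nlinarith [ht.1, ht.2]
  have := hmono (by constructor <;> norm_num) (⟨h0.le, h1⟩ : y ∈ Ico 0 1) h0
  simp [_root_.artanh_zero] at this
  linarith

lemma aux_hasDerivAt {t : ℝ} (h1 : -1 < t) (h2 : t < 1) :
    HasDerivAt (fun t : ℝ => t / (1 - t ^ 2) - _root_.artanh t) (2 * t ^ 2 / (1 - t ^ 2) ^ 2) t := by
  have hpos : (0:ℝ) < 1 - t ^ 2 := by nlinarith
  have hd1 : HasDerivAt (fun t : ℝ => t / (1 - t ^ 2))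
      ((1 + t ^ 2) / (1 - t ^ 2) ^ 2) t := by
    have := (hasDerivAt_id t).div ((hasDerivAt_const t (1:ℝ)).sub
      (hasDerivAt_pow 2 t)) hpos.ne'
    refine this.congr_deriv ?_
    simp only [id_eq, Pi.sub_apply]
    ring_nf
  have := hd1.sub (artanh_hasDerivAt h1 h2)
  refine this.congr_deriv ?_
  field_simp
  ring

lemma artanh_lt {y : ℝ} (h0 : 0 < y) (h1 : y < 1) : _root_.artanh y < y / (1 - y ^ 2) := by
  have hmono : StrictMonoOn (fun t => t / (1 - t ^ 2) - _root_.artanh t) (Ico 0 1) := by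
    apply strictMonoOn_of_deriv_pos (convex_Ico 0 1)
    · intro t ht
      exact (aux_hasDerivAt (by linarith [ht.1]) ht.2).continuousAt.continuousWithinAt
    · intro t ht
      rw [interior_Ico] at ht
      rw [(aux_hasDerivAt (by linarith [ht.1]) ht.2).deriv]
      have hpos : (0:ℝ) < 1 - t ^ 2 := by nlinarith [ht.1, ht.2]
      exact div_pos (by nlinarith [ht.1]) (by positivity)
  have := hmono (by constructor <;> norm_num) (⟨h0.le, h1⟩ : y ∈ Ico 0 1) h0
  simp [_root_.artanh_zero] at this
  linarith

lemma ratio_strictMono : StrictMonoOn (fun t : ℝ => _root_.artanh t / t) (Ioo 0 1) := by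
  apply strictMonoOn_of_deriv_pos (convex_Ioo 0 1)
  · intro t ht
    exact ((artanh_continuousAt (by linarith [ht.1]) ht.2).div
      continuousAt_id ht.1.ne').continuousWithinAt
  · intro t ht
    rw [interior_Ioo] at ht
    have hd : HasDerivAt (fun t : ℝ => _root_.artanh t / t)
        ((1 / (1 - t ^ 2) * t - _root_.artanh t * 1) / t ^ 2) t :=
      (artanh_hasDerivAt (by linarith [ht.1]) ht.2).div (hasDerivAt_id t) ht.1.ne'
    rw [hd.deriv]
    have hpos : (0:ℝ) < 1 - t ^ 2 := by nlinarith [ht.1, ht.2]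
    have hlt := artanh_lt ht.1 ht.2
    apply div_pos _ (pow_pos ht.1 2)
    rw [div_mul_eq_mul_div, one_mul, mul_one, sub_pos]
    exact hlt

theorem log_artanh_div_log_strictAnti_and_tendsto :
    StrictAntiOn (fun y : ℝ => Real.log (_root_.artanh y) / Real.log y) (Set.Ioo 0 1) ∧
    Filter.Tendsto (fun y : ℝ => Real.log (_root_.artanh y) / Real.log y)
      (nhdsWithin 0 (Set.Ioi 0)) (nhds 1) := by
  have hfacts : ∀ y ∈ Ioo (0:ℝ) 1, 0 < _root_.artanh y ∧ Real.log y < 0 ∧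
      Real.log (_root_.artanh y) / Real.log y
        = 1 - Real.log (_root_.artanh y / y) / (- Real.log y) := by
    intro y hy
    have h1 : y < _root_.artanh y := lt_artanh hy.1 hy.2
    have h2 : 0 < _root_.artanh y := hy.1.trans h1
    have h3 : Real.log y < 0 := Real.log_neg hy.1 hy.2
    refine ⟨h2, h3, ?_⟩
    have h4 : Real.log y ≠ 0 := h3.ne
    rw [Real.log_div h2.ne' hy.1.ne', div_neg, sub_neg_eq_add, sub_div, div_self h4]
    ring
  have hNpos : ∀ y ∈ Ioo (0:ℝ) 1, 0 < Real.log (_root_.artanh y / y) := by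
    intro y hy
    apply Real.log_pos
    rw [lt_div_iff₀ hy.1, one_mul]
    exact lt_artanh hy.1 hy.2
  constructor
  · intro x hx y hy hxy
    show Real.log (_root_.artanh y) / Real.log y < Real.log (_root_.artanh x) / Real.log x
    rw [(hfacts x hx).2.2, (hfacts y hy).2.2]
    have hlx : 0 < -Real.log x := by linarith [(hfacts x hx).2.1]
    have hly : 0 < -Real.log y := by linarith [(hfacts y hy).2.1]
    have hll : -Real.log y < -Real.log x := by
      have := Real.log_lt_log hx.1 hxy; linarith
    have hN : Real.log (_root_.artanh x / x) < Real.log (_root_.artanh y / y) :=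
      Real.log_lt_log (div_pos (hfacts x hx).1 hx.1) (ratio_strictMono hx hy hxy)
    have : Real.log (_root_.artanh x / x) / (-Real.log x)
        < Real.log (_root_.artanh y / y) / (-Real.log y) := by
      rw [div_lt_div_iff₀ hlx hly]
      nlinarith [mul_lt_mul_of_pos_left hll (hNpos y hy),
        mul_lt_mul_of_pos_right hN hly]
    linarith
  · -- limit
    have hslope : Tendsto (fun y : ℝ => _root_.artanh y / y) (𝓝[>] 0) (𝓝 1) := by
      have hd : HasDerivAt _root_.artanh 1 0 := by
        have := artanh_hasDerivAt (by norm_num : (-1:ℝ) < 0) (by norm_num)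
        norm_num at this; exact this
      have := hasDerivAt_iff_tendsto_slope.mp hd
      refine (this.mono_left (nhdsWithin_mono _ ?_)).congr ?_
      · intro z hz; exact ne_of_gt hz
      · intro z; simp [slope_def_field, _root_.artanh_zero]
    have hN : Tendsto (fun y : ℝ => Real.log (_root_.artanh y / y)) (𝓝[>] 0) (𝓝 0) := by
      have := (Real.continuousAt_log one_ne_zero).tendsto.comp hslope
      simpa [Function.comp_def] using this
    have hinv : Tendsto (fun y : ℝ => (Real.log y)⁻¹) (𝓝[>] 0) (𝓝 0) := by
      have h2 : Tendsto (fun y : ℝ => -Real.log y) (𝓝[>] 0) atTop :=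
        tendsto_neg_atBot_atTop.comp Real.tendsto_log_nhdsGT_zero
      have h3 := h2.inv_tendsto_atTop
      have h4 := h3.neg
      convert h4 using 2 with y
      · simp only [Pi.inv_apply, inv_neg, neg_neg]
      · simp
    have hmain : Tendsto (fun y : ℝ => Real.log (_root_.artanh y / y) * (Real.log y)⁻¹ + 1)
        (𝓝[>] 0) (𝓝 1) := by
      have := (hN.mul hinv).add (tendsto_const_nhds (x := (1:ℝ)))
      simpa [Function.comp_def] using this
    refine hmain.congr' ?_
    filter_upwards [Ioo_mem_nhdsGT_of_mem (by constructor <;> norm_num : (0:ℝ) ∈ Ico 0 1)] with y hy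
    obtain ⟨h2, h3, _⟩ := hfacts y hy
    rw [Real.log_div h2.ne' hy.1.ne', ← div_eq_mul_inv, sub_div, div_self h3.ne]
    ring
end

section
/- For every r with 0 < r < 1, one has 2π/μ(r) > (8/π)·(artanh r)^{1/4}. Consequently, for all distinct points x, y in the unit disk 𝔹² ⊂ ℂ, the modulus metric satisfies μ_{𝔹²}(x, y) ≥ (8/(π·2^{1/4}))·ρ_{𝔹²}(x, y)^{1/4}, where ρ_{𝔹²}(x, y) = 2·artanh(|x − y|/|1 − x̄y|) is the hyperbolic distance. -/
open Real Filter Set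

noncomputable def ellK (k : ℝ) : ℝ :=
  ∫ x in (0:ℝ)..1, 1 / Real.sqrt ((1 - x ^ 2) * (1 - k ^ 2 * x ^ 2))

noncomputable def Gmu (r : ℝ) : ℝ :=
  (Real.pi / 2) * ellK (Real.sqrt (1 - r ^ 2)) / ellK r


open MeasureTheory intervalIntegral

lemma ratio_pos {y : ℝ} (h0 : 0 ≤ y) (h1 : y < 1) : 0 < (1 + y) / (1 - y) :=
  div_pos (by linarith) (by linarith)

lemma artanh_nonneg {y : ℝ} (h0 : 0 ≤ y) (h1 : y < 1) : 0 ≤ _root_.artanh y := by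
  unfold _root_.artanh
  have : (1:ℝ) ≤ (1 + y) / (1 - y) := by
    rw [le_div_iff₀ (by linarith)]; linarith
  have := Real.log_nonneg this
  linarith

lemma artanh_mono {x y : ℝ} (hx : 0 ≤ x) (hxy : x ≤ y) (hy : y < 1) : _root_.artanh x ≤ _root_.artanh y := by
  unfold _root_.artanh
  have hle : (1 + x) / (1 - x) ≤ (1 + y) / (1 - y) := by
    rw [div_le_div_iff₀ (by linarith) (by linarith)]; nlinarith
  have h := Real.log_le_log (ratio_pos hx (lt_of_le_of_lt hxy hy)) hle
  linarith

lemma artanh_le_linear {y : ℝ} (h0 : 0 ≤ y) (h1 : y < 1) : _root_.artanh y ≤ y / (1 - y) := by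
  unfold _root_.artanh
  have hne : (1 - y) ≠ 0 := by linarith
  have h := Real.log_le_sub_one_of_pos (ratio_pos h0 h1)
  have heq : (1 + y) / (1 - y) - 1 = 2 * (y / (1 - y)) := by
    field_simp
    ring
  linarith [heq ▸ h]

lemma hasDerivAt_artanh {t : ℝ} (h1 : -1 < t) (h2 : t < 1) :
    HasDerivAt (fun s => Real.log ((1 + s) / (1 - s)) / 2) (1 / (1 - t ^ 2)) t := by
  have hne : (1 - t) ≠ 0 := by linarith
  have hne' : (1 + t) ≠ 0 := by linarith
  have hq : HasDerivAt (fun s : ℝ => (1 + s) / (1 - s)) (2 / (1 - t)^2) t := by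
    have hu : HasDerivAt (fun s : ℝ => 1 + s) 1 t := by
      simpa using (hasDerivAt_id t).const_add 1
    have hv : HasDerivAt (fun s : ℝ => 1 - s) (-1) t := by
      simpa using (hasDerivAt_id t).const_sub 1
    have := hu.div hv hne
    refine this.congr_deriv ?_
    field_simp
    ring
  have h12 : (1 - t ^ 2) ≠ 0 := by nlinarith
  have hratne : (1 + t) / (1 - t) ≠ 0 := div_ne_zero hne' hne
  have hlog := hq.log hratne
  have := hlog.div_const 2
  refine this.congr_deriv ?_
  field_simp
  ring

lemma artanh_le_cubic {y : ℝ} (h0 : 0 ≤ y) (h1 : y < 1) :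
    _root_.artanh y ≤ y + y ^ 3 / (3 * (1 - y ^ 2)) := by
  set g : ℝ → ℝ := fun s => s + s ^ 3 / (3 * (1 - s ^ 2)) - Real.log ((1 + s) / (1 - s)) / 2 with hg
  have key : ∀ t ∈ Icc (0:ℝ) y, HasDerivAt g (2 * t ^ 4 / (3 * (1 - t ^ 2) ^ 2)) t := by
    intro t ht
    have ht1 : t < 1 := lt_of_le_of_lt ht.2 h1
    have ht0 : (0:ℝ) ≤ t := ht.1
    have hden0 : (1 - t ^ 2) ≠ 0 := by nlinarith
    have hden : (3 * (1 - t ^ 2)) ≠ 0 := by nlinarith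
    have h3 : HasDerivAt (fun s : ℝ => s ^ 3) (3 * t ^ 2) t := by
      simpa using hasDerivAt_pow 3 t
    have hd : HasDerivAt (fun s : ℝ => 3 * (1 - s ^ 2)) (3 * (-(2 * t))) t := by
      have := ((hasDerivAt_pow 2 t).const_sub 1).const_mul 3
      simpa using this
    have hdiv := h3.div hd hden
    have hat := hasDerivAt_artanh (by linarith : -1 < t) ht1
    have := ((hasDerivAt_id t).add hdiv).sub hat
    refine this.congr_deriv ?_
    field_simp
    ring
  have hmono : MonotoneOn g (Icc 0 y) := by
    apply monotoneOn_of_deriv_nonneg (convex_Icc 0 y)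
    · exact fun t ht => ((key t ht).continuousAt).continuousWithinAt
    · intro t ht
      rw [interior_Icc] at ht
      exact ((key t (Ioo_subset_Icc_self ht)).differentiableAt).differentiableWithinAt
    · intro t ht
      rw [interior_Icc] at ht
      rw [((key t (Ioo_subset_Icc_self ht)).deriv)]
      have ht1 : t < 1 := lt_of_lt_of_le ht.2 h1.le
      have : (0:ℝ) ≤ t := le_of_lt ht.1
      positivity
  have h00 : g 0 = 0 := by simp [hg]
  have := hmono (left_mem_Icc.mpr h0) (right_mem_Icc.mpr h0) h0
  rw [h00] at this
  unfold _root_.artanh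
  simp only [hg] at this
  linarith

lemma log_upper (x : ℝ) (hx : 0 < x) (m : ℕ) :
    Real.log x ≤ m * Real.log 2 + (x / 2 ^ m - 1) := by
  have h2m : (0:ℝ) < 2 ^ m := by positivity
  have hxm : (0:ℝ) < x / 2 ^ m := by positivity
  have h := Real.log_le_sub_one_of_pos hxm
  have heq : Real.log (x / 2 ^ m) = Real.log x - m * Real.log 2 := by
    rw [Real.log_div (ne_of_gt hx) (ne_of_gt h2m), Real.log_pow]
  rw [heq] at h
  linarith

lemma integrable_shift_rpow {a : ℝ} : IntervalIntegrable (fun x => (1 - x) ^ (-(1/2) : ℝ)) volume a 1 := by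
  have h := intervalIntegral.intervalIntegrable_rpow' (a := 1 - 1) (b := 1 - a) (r := -(1/2)) (by norm_num)
  have := (h.comp_sub_left 1).symm
  simpa using this

lemma integral_shift_rpow {a : ℝ} (ha : a ≤ 1) :
    ∫ x in a..1, (1 - x) ^ (-(1/2) : ℝ) = 2 * Real.sqrt (1 - a) := by
  have h1 : (∫ x in a..1, (1 - x) ^ (-(1/2) : ℝ)) = ∫ x in (1-1:ℝ)..(1-a), x ^ (-(1/2):ℝ) :=
    intervalIntegral.integral_comp_sub_left (fun x => x ^ (-(1/2):ℝ)) 1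
  rw [h1, integral_rpow (Or.inl (by norm_num)), Real.sqrt_eq_rpow]
  norm_num
  ring

lemma rpow_eq_inv_sqrt {x : ℝ} (hx : x ≤ 1) : (1 - x) ^ (-(1/2) : ℝ) = 1 / Real.sqrt (1 - x) := by
  rw [Real.rpow_neg (by linarith), Real.sqrt_eq_rpow]
  norm_num

lemma elli_meas {k : ℝ} :
    AEStronglyMeasurable (fun x => 1 / Real.sqrt ((1 - x^2) * (1 - k^2 * x^2))) (volume.restrict (Set.uIoc (0:ℝ) 1)) := by
  have hc : Continuous fun x : ℝ => Real.sqrt ((1 - x^2) * (1 - k^2 * x^2)) := by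
    fun_prop
  simp only [one_div]
  exact hc.measurable.inv.aestronglyMeasurable

lemma elli_integrable {k : ℝ} (hk1 : k^2 < 1) :
    IntervalIntegrable (fun x => 1 / Real.sqrt ((1 - x^2) * (1 - k^2 * x^2))) volume 0 1 := by
  have hg : IntervalIntegrable (fun x => (1 / Real.sqrt (1 - k^2)) * (1 - x) ^ (-(1/2) : ℝ)) volume 0 1 :=
    integrable_shift_rpow.const_mul _
  refine hg.mono_fun elli_meas ?_
  rw [Filter.EventuallyLE, ae_restrict_iff' measurableSet_uIoc]
  apply Filter.Eventually.of_forall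
  intro x hx
  rw [Set.uIoc_of_le (by norm_num : (0:ℝ) ≤ 1)] at hx
  obtain ⟨hx0, hx1⟩ := hx
  have hrw : (1 / Real.sqrt (1 - k^2)) * (1 - x) ^ (-(1/2) : ℝ)
      = 1 / Real.sqrt ((1-x) * (1-k^2)) := by
    rw [rpow_eq_inv_sqrt (by linarith), Real.sqrt_mul (by linarith)]
    rw [one_div, one_div, one_div, mul_inv]
    ring
  rw [Real.norm_of_nonneg (by positivity), Real.norm_of_nonneg (by rw [hrw]; positivity), hrw]
  rcases eq_or_lt_of_le hx1 with hx1' | hx1'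
  · subst hx1'
    norm_num
  · have hb0 : (0:ℝ) < (1 - x) * (1 - k^2) := by nlinarith
    have h1 : (1 - x) ≤ 1 - x^2 := by nlinarith
    have h2 : 1 - k^2 ≤ 1 - k^2 * x^2 := by nlinarith [sq_nonneg k, sq_nonneg (k*x)]
    have hb : (1 - x) * (1 - k^2) ≤ (1 - x^2) * (1 - k^2 * x^2) :=
      mul_le_mul h1 h2 (by nlinarith) (by nlinarith)
    exact one_div_le_one_div_of_le (Real.sqrt_pos.mpr hb0) (Real.sqrt_le_sqrt hb)

lemma integrable_inv_sqrt_one_sub_sq :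
    IntervalIntegrable (fun x : ℝ => 1 / Real.sqrt (1 - x^2)) volume 0 1 := by
  have := elli_integrable (k := 0) (by norm_num)
  simpa using this

lemma integral_inv_sqrt_one_sub_sq : ∫ x in (0:ℝ)..1, 1 / Real.sqrt (1 - x^2) = π/2 := by
  have h : ∫ x in (0:ℝ)..1, 1 / Real.sqrt (1 - x^2) = Real.arcsin 1 - Real.arcsin 0 := by
    apply intervalIntegral.integral_eq_sub_of_hasDeriv_right_of_le (by norm_num)
    · exact Real.continuous_arcsin.continuousOn
    · intro x hx
      exact (Real.hasDerivAt_arcsin (by nlinarith [hx.1] : x ≠ -1)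
        (by nlinarith [hx.2] : x ≠ 1)).hasDerivWithinAt
    · exact integrable_inv_sqrt_one_sub_sq
  rw [h, Real.arcsin_one, Real.arcsin_zero, sub_zero]

lemma ellK_eq (k : ℝ) : ellK k = ∫ x in (0:ℝ)..1, 1 / Real.sqrt ((1 - x^2) * (1 - k^2 * x^2)) := by
  unfold ellK; norm_num

lemma ellK_ge_pi_half {k : ℝ} (hk : k^2 < 1) : π/2 ≤ ellK k := by
  rw [ellK_eq, ← integral_inv_sqrt_one_sub_sq]
  apply intervalIntegral.integral_mono_on (by norm_num) integrable_inv_sqrt_one_sub_sq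
    (elli_integrable hk)
  intro x hx
  obtain ⟨hx0, hx1⟩ := hx
  rcases eq_or_lt_of_le hx1 with hx1' | hx1'
  · subst hx1'; norm_num
  · have hx2 : x^2 < 1 := by nlinarith
    have hkx2 : k^2 * x^2 ≤ k^2 := mul_le_of_le_one_right (sq_nonneg k) hx2.le
    have hA : (0:ℝ) < (1 - x^2) * (1 - k^2 * x^2) := mul_pos (by nlinarith) (by linarith)
    apply one_div_le_one_div_of_le (Real.sqrt_pos.mpr hA)
    apply Real.sqrt_le_sqrt
    exact mul_le_of_le_one_right (by nlinarith)
      (by nlinarith [mul_nonneg (sq_nonneg k) (sq_nonneg x)])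

lemma ellK_pos {k : ℝ} (hk : k^2 < 1) : 0 < ellK k :=
  lt_of_lt_of_le (by positivity) (ellK_ge_pi_half hk)

lemma ellK_le_simple {k : ℝ} (hk : k^2 < 1) : ellK k ≤ π/2 * (1 / Real.sqrt (1 - k^2)) := by
  have key : ellK k ≤ ∫ x in (0:ℝ)..1, (1 / Real.sqrt (1 - k^2)) * (1 / Real.sqrt (1 - x^2)) := by
    rw [ellK_eq]
    apply intervalIntegral.integral_mono_on (by norm_num) (elli_integrable hk)
      (integrable_inv_sqrt_one_sub_sq.const_mul _)
    intro x hx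
    obtain ⟨hx0, hx1⟩ := hx
    have hrw : (1 / Real.sqrt (1 - k^2)) * (1 / Real.sqrt (1 - x^2))
        = 1 / Real.sqrt ((1 - x^2) * (1 - k^2)) := by
      rw [Real.sqrt_mul (by nlinarith), one_div, one_div, one_div, mul_inv]
      ring
    rw [hrw]
    rcases eq_or_lt_of_le hx1 with hx1' | hx1'
    · subst hx1'; norm_num
    · have hx2 : x^2 < 1 := by nlinarith
      have hkx2 : k^2 * x^2 ≤ k^2 := mul_le_of_le_one_right (sq_nonneg k) hx2.le
      have hB : (0:ℝ) < (1 - x^2) * (1 - k^2) := mul_pos (by nlinarith) (by linarith)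
      apply one_div_le_one_div_of_le (Real.sqrt_pos.mpr hB)
      apply Real.sqrt_le_sqrt
      exact mul_le_mul_of_nonneg_left (by linarith) (by nlinarith)
  rw [intervalIntegral.integral_const_mul, integral_inv_sqrt_one_sub_sq] at key
  linarith [key]

lemma ae_ne_one : ∀ᵐ (x:ℝ) ∂(volume : Measure ℝ), x ≠ 1 := by
  rw [MeasureTheory.ae_iff]
  have : {x : ℝ | ¬ x ≠ 1} = {1} := by ext z; simp
  rw [this]
  exact Real.volume_singleton

lemma ellK_ge_artanh {k : ℝ} (hk0 : 0 < k) (hk1 : k < 1) : _root_.artanh k / k ≤ ellK k := by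
  have hcont : IntervalIntegrable (fun x : ℝ => 1 / (1 - k^2 * x^2)) volume 0 1 := by
    apply ContinuousOn.intervalIntegrable
    apply ContinuousOn.div continuousOn_const (by fun_prop)
    intro x hx
    rw [Set.uIcc_of_le (by norm_num : (0:ℝ) ≤ 1)] at hx
    obtain ⟨h0, h1⟩ := hx
    have hx2 : x^2 ≤ 1 := by nlinarith
    have hkx2 : k^2 * x^2 ≤ k^2 := mul_le_of_le_one_right (sq_nonneg k) hx2
    nlinarith
  have hI : ∫ x in (0:ℝ)..1, 1 / (1 - k^2 * x^2) = _root_.artanh k / k := by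
    have hF : ∀ x ∈ Set.uIcc (0:ℝ) 1,
        HasDerivAt (fun s => Real.log ((1 + k*s) / (1 - k*s)) / 2 / k) (1 / (1 - k^2 * x^2)) x := by
      intro x hx
      rw [Set.uIcc_of_le (by norm_num : (0:ℝ) ≤ 1)] at hx
      obtain ⟨h0, h1⟩ := hx
      have hkx1 : -1 < k * x := by nlinarith
      have hkx2 : k * x < 1 := by nlinarith
      have inner := hasDerivAt_artanh hkx1 hkx2
      have hlin : HasDerivAt (fun s : ℝ => k * s) k x := by
        simpa using (hasDerivAt_id x).const_mul k
      have := (inner.comp x hlin).div_const k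
      refine this.congr_deriv ?_
      have hne2 : 1 - k^2 * x^2 ≠ 0 := by nlinarith [mul_le_of_le_one_right (sq_nonneg k) (by nlinarith : x^2 ≤ 1)]
      have hrw : 1 - (k*x)^2 = 1 - k^2*x^2 := by ring
      rw [hrw]
      field_simp
    rw [intervalIntegral.integral_eq_sub_of_hasDerivAt hF hcont]
    norm_num
    unfold _root_.artanh
    ring
  rw [← hI, ellK_eq]
  apply intervalIntegral.integral_mono_ae_restrict (by norm_num) hcont (elli_integrable (by nlinarith))
  have hae : ∀ᵐ (x:ℝ) ∂(volume.restrict (Icc (0:ℝ) 1)), x ≠ 1 :=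
    ae_ne_one.filter_mono (MeasureTheory.ae_mono Measure.restrict_le_self)
  filter_upwards [hae, MeasureTheory.ae_restrict_mem measurableSet_Icc] with x hne hx
  obtain ⟨hx0, hx1⟩ := hx
  have hx1' : x < 1 := lt_of_le_of_ne hx1 hne
  have hx2 : x^2 < 1 := by nlinarith
  have hkxx : k^2 * x^2 ≤ x^2 := mul_le_of_le_one_left (sq_nonneg x) (by nlinarith)
  have hA : (0:ℝ) < (1 - x^2) * (1 - k^2 * x^2) := mul_pos (by nlinarith) (by linarith)
  have h2 : Real.sqrt ((1 - x^2) * (1 - k^2 * x^2)) ≤ 1 - k^2 * x^2 := by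
    have hle : (1 - x^2) * (1 - k^2 * x^2) ≤ (1 - k^2 * x^2)^2 := by nlinarith
    calc Real.sqrt ((1 - x^2) * (1 - k^2 * x^2)) ≤ Real.sqrt ((1 - k^2 * x^2)^2) :=
          Real.sqrt_le_sqrt hle
      _ = 1 - k^2 * x^2 := Real.sqrt_sq (by nlinarith)
  exact one_div_le_one_div_of_le (Real.sqrt_pos.mpr hA) h2

lemma ellK_upper_split {r : ℝ} (hr0 : 0 < r) (hr1 : r < 1) :
    ellK (Real.sqrt (1 - r^2)) ≤ 1 + Real.log 2 - Real.log r := by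
  set k := Real.sqrt (1 - r^2) with hk
  have hr2 : 0 < 1 - r^2 := by nlinarith
  have hk2 : k^2 = 1 - r^2 := Real.sq_sqrt hr2.le
  have hkk : k^2 < 1 := by rw [hk2]; nlinarith
  set c := (4 - r^2)/(4 + r^2) with hc
  have hden : (0:ℝ) < 4 + r^2 := by positivity
  have hc0 : 0 < c := div_pos (by nlinarith) hden
  have hc1 : c < 1 := by rw [div_lt_one hden]; nlinarith
  clear_value k c
  have hint : IntervalIntegrable (fun x => 1 / Real.sqrt ((1 - x^2) * (1 - k^2 * x^2)))
      volume 0 1 := elli_integrable hkk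
  have hsub1 : Set.uIcc (0:ℝ) c ⊆ Set.uIcc (0:ℝ) 1 := by
    rw [Set.uIcc_of_le hc0.le, Set.uIcc_of_le (by norm_num : (0:ℝ) ≤ 1)]
    exact Set.Icc_subset_Icc le_rfl hc1.le
  have hsub2 : Set.uIcc c 1 ⊆ Set.uIcc (0:ℝ) 1 := by
    rw [Set.uIcc_of_le hc1.le, Set.uIcc_of_le (by norm_num : (0:ℝ) ≤ 1)]
    exact Set.Icc_subset_Icc hc0.le le_rfl
  have hint1 := hint.mono_set hsub1
  have hint2 := hint.mono_set hsub2
  have hsplit : ellK k = (∫ x in (0:ℝ)..c, 1 / Real.sqrt ((1 - x^2) * (1 - k^2 * x^2)))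
      + ∫ x in c..1, 1 / Real.sqrt ((1 - x^2) * (1 - k^2 * x^2)) := by
    rw [ellK_eq]
    exact (intervalIntegral.integral_add_adjacent_intervals hint1 hint2).symm
  -- piece A : continuous comparator on [0,c]
  have hcontA : IntervalIntegrable (fun x : ℝ => 1 / (1 - x^2)) volume 0 c := by
    apply ContinuousOn.intervalIntegrable
    apply ContinuousOn.div continuousOn_const (by fun_prop)
    intro x hx
    rw [Set.uIcc_of_le hc0.le] at hx
    obtain ⟨h0, h1⟩ := hx
    nlinarith
  have hA : (∫ x in (0:ℝ)..c, 1 / Real.sqrt ((1 - x^2) * (1 - k^2 * x^2)))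
      ≤ ∫ x in (0:ℝ)..c, 1 / (1 - x^2) := by
    apply intervalIntegral.integral_mono_on hc0.le hint1 hcontA
    intro x hx
    obtain ⟨hx0, hx1⟩ := hx
    have hxlt : x < 1 := lt_of_le_of_lt hx1 hc1
    have hx2 : x^2 < 1 := by nlinarith
    have hkxx : k^2 * x^2 ≤ x^2 := mul_le_of_le_one_left (sq_nonneg x) hkk.le
    have hstep : 1 - x^2 ≤ Real.sqrt ((1 - x^2) * (1 - k^2 * x^2)) := by
      have hsq : (1-x^2)^2 ≤ (1 - x^2) * (1 - k^2 * x^2) := by nlinarith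
      calc 1 - x^2 = Real.sqrt ((1-x^2)^2) := (Real.sqrt_sq (by linarith)).symm
        _ ≤ _ := Real.sqrt_le_sqrt hsq
    exact one_div_le_one_div_of_le (by linarith) hstep
  have hAv : (∫ x in (0:ℝ)..c, 1 / (1 - x^2)) = Real.log 2 - Real.log r := by
    have hF : ∀ x ∈ Set.uIcc (0:ℝ) c,
        HasDerivAt (fun s => Real.log ((1 + s) / (1 - s)) / 2) (1 / (1 - x^2)) x := by
      intro x hx
      rw [Set.uIcc_of_le hc0.le] at hx
      exact hasDerivAt_artanh (by linarith [hx.1]) (lt_of_le_of_lt hx.2 hc1)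
    rw [intervalIntegral.integral_eq_sub_of_hasDerivAt hF hcontA]
    have hcc : (1 + c)/(1 - c) = 4/r^2 := by
      rw [div_eq_div_iff (by linarith) (by positivity)]
      rw [hc]
      field_simp
      ring
    norm_num
    rw [hcc, Real.log_div (by norm_num) (by positivity),
      show (4:ℝ) = 2^2 by norm_num, Real.log_pow, Real.log_pow]
    push_cast
    ring
  -- piece B
  have hcstB : IntervalIntegrable (fun x : ℝ => (1/(r * Real.sqrt (1+c))) * (1-x) ^ (-(1/2):ℝ))
      volume c 1 := integrable_shift_rpow.const_mul _
  have hB : (∫ x in c..1, 1 / Real.sqrt ((1 - x^2) * (1 - k^2 * x^2)))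
      ≤ ∫ x in c..1, (1/(r * Real.sqrt (1+c))) * (1-x) ^ (-(1/2):ℝ) := by
    apply intervalIntegral.integral_mono_on hc1.le hint2 hcstB
    intro x hx
    obtain ⟨hx0, hx1⟩ := hx
    have hx00 : (0:ℝ) ≤ x := le_trans hc0.le hx0
    rcases eq_or_lt_of_le hx1 with hx1' | hx1'
    · subst hx1'
      norm_num [Real.zero_rpow]
    · have h1 : (1+c)*(1-x) ≤ 1 - x^2 := by nlinarith
      have h2 : r^2 ≤ 1 - k^2*x^2 := by
        rw [hk2]
        nlinarith [mul_le_of_le_one_left (by nlinarith : (0:ℝ) ≤ 1 - r^2) (by nlinarith : x^2 ≤ 1)]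
      have hrw : (1/(r * Real.sqrt (1+c))) * (1-x) ^ (-(1/2):ℝ)
          = 1 / Real.sqrt (r^2 * ((1+c)*(1-x))) := by
        rw [rpow_eq_inv_sqrt hx1'.le, Real.sqrt_mul (sq_nonneg r),
          Real.sqrt_mul (by linarith : (0:ℝ) ≤ 1+c), Real.sqrt_sq hr0.le]
        rw [one_div, one_div, one_div, mul_inv, mul_inv]
        ring
      rw [hrw]
      have hpos : 0 < r^2 * ((1+c)*(1-x)) := mul_pos (by positivity) (mul_pos (by linarith) (by linarith))
      apply one_div_le_one_div_of_le (Real.sqrt_pos.mpr hpos)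
      apply Real.sqrt_le_sqrt
      nlinarith [mul_le_mul h1 h2 (sq_nonneg r) (by nlinarith : (0:ℝ) ≤ 1 - x^2)]
  have hBv : (∫ x in c..1, (1/(r * Real.sqrt (1+c))) * (1-x) ^ (-(1/2):ℝ)) = 1 := by
    rw [intervalIntegral.integral_const_mul, integral_shift_rpow hc1.le]
    have h1c : Real.sqrt (1-c) = r/2 * Real.sqrt (1+c) := by
      have : 1 - c = (r/2)^2 * (1+c) := by
        rw [hc]; field_simp; ring
      rw [this, Real.sqrt_mul (sq_nonneg _), Real.sqrt_sq (by positivity : (0:ℝ) ≤ r/2)]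
    rw [h1c]
    have hsp : Real.sqrt (1+c) ≠ 0 := ne_of_gt (Real.sqrt_pos.mpr (by linarith))
    field_simp
  rw [hsplit]
  have hfin := add_le_add hA hB
  rw [hAv, hBv] at hfin
  linarith

lemma rpow_quarter_le {c t : ℝ} (hc : 0 ≤ c) (ht0 : 0 ≤ t) (ht : c ≤ t^4) :
    c ^ ((1:ℝ)/4) ≤ t := by
  have h1 : c ^ ((1:ℝ)/4) ≤ (t^4 : ℝ) ^ ((1:ℝ)/4) := Real.rpow_le_rpow hc ht (by norm_num)
  have h2 : ((t^4:ℝ)) ^ ((1:ℝ)/4) = t := by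
    rw [← Real.rpow_natCast t 4, ← Real.rpow_mul ht0]
    norm_num
  linarith [h2 ▸ h1]

lemma gridA {a b c d t : ℝ} (m : ℕ)
    (ha : 0 < a) (hb1 : b < 1) (hb0 : 0 ≤ b)
    (hc : b + b^3/(3*(1-b^2)) ≤ c)
    (hd : (m:ℝ) * 0.6931471808 + (1/(a * 2^m) - 1) ≤ d)
    (ht : c ≤ t^4) (ht0 : 0 ≤ t)
    (hfin : t * (1 + 0.6931471808 + d) ≤ 2.46) :
    ∀ r : ℝ, a ≤ r → r ≤ b → (_root_.artanh r) ^ ((1:ℝ)/4) * (1 + Real.log 2 - Real.log r) < π^2/4 := by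
  intro r hra hrb
  have hr0 : 0 < r := lt_of_lt_of_le ha hra
  have hr1 : r < 1 := lt_of_le_of_lt hrb hb1
  have hT : _root_.artanh r ≤ c :=
    le_trans (le_trans (artanh_mono hr0.le hrb hb1) (artanh_le_cubic hb0 hb1)) hc
  have hTn : 0 ≤ _root_.artanh r := _root_.artanh_nonneg hr0.le hr1
  have h14 : (_root_.artanh r) ^ ((1:ℝ)/4) ≤ t := by
    calc (_root_.artanh r) ^ ((1:ℝ)/4) ≤ c ^ ((1:ℝ)/4) :=
          Real.rpow_le_rpow hTn hT (by norm_num)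
      _ ≤ t := rpow_quarter_le (le_trans hTn hT) ht0 ht
  have hlog2 : Real.log 2 < 0.6931471808 := Real.log_two_lt_d9
  have hlr : -Real.log r ≤ d := by
    have h2 := log_upper (1/r) (by positivity) m
    have h3 : Real.log (1/r) = - Real.log r := by rw [one_div, Real.log_inv]
    have h4 : (1/r)/2^m ≤ 1/(a*2^m) := by
      rw [div_div, one_div, one_div]
      exact inv_anti₀ (by positivity) (mul_le_mul_of_nonneg_right hra (by positivity))
    have h5 : (m:ℝ) * Real.log 2 ≤ (m:ℝ) * 0.6931471808 :=
      mul_le_mul_of_nonneg_left hlog2.le (Nat.cast_nonneg m)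
    rw [h3] at h2
    linarith
  have hlogr : Real.log r ≤ 0 := Real.log_nonpos hr0.le hr1.le
  have hlog2p : 0 < Real.log 2 := Real.log_pos (by norm_num)
  have hmul : (_root_.artanh r) ^ ((1:ℝ)/4) * (1 + Real.log 2 - Real.log r)
      ≤ t * (1 + 0.6931471808 + d) := by
    apply mul_le_mul h14 (by linarith) (by linarith) ht0
  have hpi : (3.141592:ℝ) < π := Real.pi_gt_d6
  have hpi2 : (2.46:ℝ) < π^2/4 := by nlinarith
  linarith

lemma tailA : ∀ r : ℝ, 0 < r → r ≤ 1/131072 →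
    (_root_.artanh r) ^ ((1:ℝ)/4) * (1 + Real.log 2 - Real.log r) < π^2/4 := by
  intro r hr0 hrb
  have hr1 : r < 1 := by linarith
  have hT2 : _root_.artanh r ≤ 2*r := by
    have h1 := artanh_le_linear hr0.le hr1
    have h2 : r/(1-r) ≤ 2*r := by
      rw [div_le_iff₀ (by linarith)]
      nlinarith
    linarith
  have hTn : 0 ≤ _root_.artanh r := _root_.artanh_nonneg hr0.le hr1
  have hlog2 : Real.log 2 < 0.6931471808 := Real.log_two_lt_d9
  have hlogr : Real.log r ≤ 0 := Real.log_nonpos hr0.le hr1.le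
  have hL : 1 + Real.log 2 - Real.log r ≤ 8 * r ^ (-(1/8) : ℝ) := by
    have h1 : Real.log (r ^ (-(1/8):ℝ)) ≤ r ^ (-(1/8):ℝ) - 1 :=
      Real.log_le_sub_one_of_pos (by positivity)
    have h2 : Real.log (r ^ (-(1/8):ℝ)) = -(1/8) * Real.log r := Real.log_rpow hr0 _
    rw [h2] at h1
    linarith
  have hprod : (_root_.artanh r) ^ ((1:ℝ)/4) ≤ (2*r) ^ ((1:ℝ)/4) :=
    Real.rpow_le_rpow hTn hT2 (by norm_num)
  have hcomb : (_root_.artanh r) ^ ((1:ℝ)/4) * (1 + Real.log 2 - Real.log r)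
      ≤ (2*r) ^ ((1:ℝ)/4) * (8 * r ^ (-(1/8):ℝ)) := by
    have hlog2p : 0 < Real.log 2 := Real.log_pos (by norm_num)
    apply mul_le_mul hprod hL (by linarith) (Real.rpow_nonneg (by linarith) _)
  have heq : (2*r) ^ ((1:ℝ)/4) * (8 * r ^ (-(1/8):ℝ))
      = 8 * (2:ℝ) ^ ((1:ℝ)/4) * r ^ ((1:ℝ)/8) := by
    rw [Real.mul_rpow (by norm_num) hr0.le]
    have h3 : r ^ ((1:ℝ)/4) * r ^ (-(1/8):ℝ) = r ^ ((1:ℝ)/8) := by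
      rw [← Real.rpow_add hr0]
      norm_num
    calc (2:ℝ) ^ ((1:ℝ)/4) * r ^ ((1:ℝ)/4) * (8 * r ^ (-(1/8):ℝ))
        = 8 * (2:ℝ) ^ ((1:ℝ)/4) * (r ^ ((1:ℝ)/4) * r ^ (-(1/8):ℝ)) := by ring
      _ = 8 * (2:ℝ) ^ ((1:ℝ)/4) * r ^ ((1:ℝ)/8) := by rw [h3]
  have h218 : (2:ℝ) ^ ((1:ℝ)/4) ≤ 1.18921 := by
    have : ((2:ℝ)) ≤ (1.18921:ℝ)^(4:ℕ) := by norm_num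
    calc (2:ℝ) ^ ((1:ℝ)/4) ≤ ((1.18921:ℝ)^(4:ℕ)) ^ ((1:ℝ)/4) :=
          Real.rpow_le_rpow (by norm_num) this (by norm_num)
      _ = 1.18921 := by
          rw [← Real.rpow_natCast (1.18921:ℝ) 4, ← Real.rpow_mul (by norm_num)]
          norm_num
  have hr18 : r ^ ((1:ℝ)/8) ≤ 0.2295 := by
    have h5 : r ≤ (0.2295:ℝ)^(8:ℕ) := by
      calc r ≤ 1/131072 := hrb
        _ ≤ (0.2295:ℝ)^(8:ℕ) := by norm_num
    calc r ^ ((1:ℝ)/8) ≤ ((0.2295:ℝ)^(8:ℕ)) ^ ((1:ℝ)/8) :=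
          Real.rpow_le_rpow hr0.le h5 (by norm_num)
      _ = 0.2295 := by
          rw [← Real.rpow_natCast (0.2295:ℝ) 8, ← Real.rpow_mul (by norm_num)]
          norm_num
  have hrn : 0 ≤ r ^ ((1:ℝ)/8) := Real.rpow_nonneg hr0.le _
  have h2n : 0 ≤ (2:ℝ) ^ ((1:ℝ)/4) := Real.rpow_nonneg (by norm_num) _
  have hpi : (3.141592:ℝ) < π := Real.pi_gt_d6
  have hpi2 : (2.46:ℝ) < π^2/4 := by nlinarith
  have hfin : 8 * (2:ℝ) ^ ((1:ℝ)/4) * r ^ ((1:ℝ)/8) ≤ 8 * 1.18921 * 0.2295 := by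
    have := mul_le_mul (mul_le_mul_of_nonneg_left h218 (by norm_num : (0:ℝ) ≤ 8)) hr18 hrn
      (by norm_num : (0:ℝ) ≤ 8 * 1.18921)
    linarith
  rw [heq] at hcomb
  nlinarith

lemma caseA_numeric : ∀ r : ℝ, 0 < r → r ≤ 4/5 →
    (_root_.artanh r) ^ ((1:ℝ)/4) * (1 + Real.log 2 - Real.log r) < π^2/4 := by
  intro r h0 h8
  rcases le_or_gt r (1/131072) with h | h
  · exact tailA r h0 h
  rcases le_or_gt r (1/1024 : ℝ) with hb | h
  · exact gridA (a := (1/131072 : ℝ)) (b := (1/1024 : ℝ)) (c := (4883/5000000 : ℝ)) (d := (117835021/10000000 : ℝ)) (t := (8839/50000 : ℝ)) 17 (by norm_num) (by norm_num) (by norm_num) (by norm_num) (by norm_num) (by norm_num) (by norm_num) (by norm_num) r (le_of_lt h) hb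
  rcases le_or_gt r (3/512 : ℝ) with hb | h
  · exact gridA (a := (1/1024 : ℝ)) (b := (3/512 : ℝ)) (c := (11719/2000000 : ℝ)) (d := (69314719/10000000 : ℝ)) (t := (6917/25000 : ℝ)) 10 (by norm_num) (by norm_num) (by norm_num) (by norm_num) (by norm_num) (by norm_num) (by norm_num) (by norm_num) r (le_of_lt h) hb
  rcases le_or_gt r (1/64 : ℝ) with hb | h
  · exact gridA (a := (3/512 : ℝ)) (b := (1/64 : ℝ)) (c := (156263/10000000 : ℝ)) (d := (12963409/2500000 : ℝ)) (t := (35357/100000 : ℝ)) 7 (by norm_num) (by norm_num) (by norm_num) (by norm_num) (by norm_num) (by norm_num) (by norm_num) (by norm_num) r (le_of_lt h) hb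
  rcases le_or_gt r (31/1024 : ℝ) with hb | h
  · exact gridA (a := (1/64 : ℝ)) (b := (31/1024 : ℝ)) (c := (302827/10000000 : ℝ)) (d := (41588831/10000000 : ℝ)) (t := (10429/25000 : ℝ)) 6 (by norm_num) (by norm_num) (by norm_num) (by norm_num) (by norm_num) (by norm_num) (by norm_num) (by norm_num) r (le_of_lt h) hb
  rcases le_or_gt r (51/1024 : ℝ) with hb | h
  · exact gridA (a := (31/1024 : ℝ)) (b := (51/1024 : ℝ)) (c := (24923/500000 : ℝ)) (d := (1748997/500000 : ℝ)) (t := (47251/100000 : ℝ)) 5 (by norm_num) (by norm_num) (by norm_num) (by norm_num) (by norm_num) (by norm_num) (by norm_num) (by norm_num) r (le_of_lt h) hb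
  rcases le_or_gt r (75/1024 : ℝ) with hb | h
  · exact gridA (a := (51/1024 : ℝ)) (b := (75/1024 : ℝ)) (c := (733739/10000000 : ℝ)) (d := (30274907/10000000 : ℝ)) (t := (26023/50000 : ℝ)) 4 (by norm_num) (by norm_num) (by norm_num) (by norm_num) (by norm_num) (by norm_num) (by norm_num) (by norm_num) r (le_of_lt h) hb
  rcases le_or_gt r (23/256 : ℝ) with hb | h
  · exact gridA (a := (75/1024 : ℝ)) (b := (23/256 : ℝ)) (c := (7207/80000 : ℝ)) (d := (27861083/10000000 : ℝ)) (t := (27393/50000 : ℝ)) 3 (by norm_num) (by norm_num) (by norm_num) (by norm_num) (by norm_num) (by norm_num) (by norm_num) (by norm_num) r (le_of_lt h) hb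
  rcases le_or_gt r (31/256 : ℝ) with hb | h
  · exact gridA (a := (23/256 : ℝ)) (b := (31/256 : ℝ)) (c := (243389/2000000 : ℝ)) (d := (24707459/10000000 : ℝ)) (t := (7383/12500 : ℝ)) 3 (by norm_num) (by norm_num) (by norm_num) (by norm_num) (by norm_num) (by norm_num) (by norm_num) (by norm_num) r (le_of_lt h) hb
  rcases le_or_gt r (177/1024 : ℝ) with hb | h
  · exact gridA (a := (31/256 : ℝ)) (b := (177/1024 : ℝ)) (c := (1746261/10000000 : ℝ)) (d := (21116997/10000000 : ℝ)) (t := (16161/25000 : ℝ)) 3 (by norm_num) (by norm_num) (by norm_num) (by norm_num) (by norm_num) (by norm_num) (by norm_num) (by norm_num) r (le_of_lt h) hb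
  rcases le_or_gt r (119/512 : ℝ) with hb | h
  · exact gridA (a := (177/1024 : ℝ)) (b := (119/512 : ℝ)) (c := (2368461/10000000 : ℝ)) (d := (18326221/10000000 : ℝ)) (t := (34881/50000 : ℝ)) 2 (by norm_num) (by norm_num) (by norm_num) (by norm_num) (by norm_num) (by norm_num) (by norm_num) (by norm_num) r (le_of_lt h) hb
  rcases le_or_gt r (361/1024 : ℝ) with hb | h
  · exact gridA (a := (119/512 : ℝ)) (b := (361/1024 : ℝ)) (c := (461521/1250000 : ℝ)) (d := (14619247/10000000 : ℝ)) (t := (77951/100000 : ℝ)) 2 (by norm_num) (by norm_num) (by norm_num) (by norm_num) (by norm_num) (by norm_num) (by norm_num) (by norm_num) r (le_of_lt h) hb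
  rcases le_or_gt r (537/1024 : ℝ) with hb | h
  · exact gridA (a := (361/1024 : ℝ)) (b := (537/1024 : ℝ)) (c := (5907227/10000000 : ℝ)) (d := (5557149/5000000 : ℝ)) (t := (87669/100000 : ℝ)) 1 (by norm_num) (by norm_num) (by norm_num) (by norm_num) (by norm_num) (by norm_num) (by norm_num) (by norm_num) r (le_of_lt h) hb
  rcases le_or_gt r (331/512 : ℝ) with hb | h
  · exact gridA (a := (537/1024 : ℝ)) (b := (331/512 : ℝ)) (c := (8012187/10000000 : ℝ)) (d := (4534451/5000000 : ℝ)) (t := (94611/100000 : ℝ)) 0 (by norm_num) (by norm_num) (by norm_num) (by norm_num) (by norm_num) (by norm_num) (by norm_num) (by norm_num) r (le_of_lt h) hb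
  · exact gridA (a := (331/512 : ℝ)) (b := (4/5 : ℝ)) (c := (12740741/10000000 : ℝ)) (d := (2734139/5000000 : ℝ)) (t := (106243/100000 : ℝ)) 0 (by norm_num) (by norm_num) (by norm_num) (by norm_num) (by norm_num) (by norm_num) (by norm_num) (by norm_num) r (le_of_lt h) h8

lemma part1 : ∀ r : ℝ, 0 < r → r < 1 →
    2 * Real.pi / Gmu r > (8 / Real.pi) * (_root_.artanh r) ^ ((1:ℝ)/4) := by
  intro r hr0 hr1
  have hr2 : r^2 < 1 := by nlinarith
  have hk2 : (Real.sqrt (1 - r^2))^2 = 1 - r^2 := Real.sq_sqrt (by nlinarith)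
  have hkk : (Real.sqrt (1 - r^2))^2 < 1 := by rw [hk2]; nlinarith
  have hKpos : 0 < ellK r := ellK_pos hr2
  have hK'pos : 0 < ellK (Real.sqrt (1 - r^2)) := ellK_pos hkk
  have hpi : 0 < π := Real.pi_pos
  have hG : 2 * π / Gmu r = 4 * ellK r / ellK (Real.sqrt (1 - r^2)) := by
    unfold Gmu
    rw [div_div_eq_mul_div, div_eq_div_iff (by positivity) hK'pos.ne']
    field_simp
    ring
  rw [hG, gt_iff_lt, lt_div_iff₀ hK'pos]
  have hTn : 0 ≤ _root_.artanh r := _root_.artanh_nonneg hr0.le hr1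
  have hT4n : 0 ≤ (_root_.artanh r) ^ ((1:ℝ)/4) := Real.rpow_nonneg hTn _
  rcases le_or_gt r (4/5) with hc | hc
  · -- case A
    have h1 : π/2 ≤ ellK r := ellK_ge_pi_half hr2
    have h2 : ellK (Real.sqrt (1 - r^2)) ≤ 1 + Real.log 2 - Real.log r :=
      ellK_upper_split hr0 hr1
    have h3 := caseA_numeric r hr0 hc
    calc 8 / π * (_root_.artanh r) ^ ((1:ℝ)/4) * ellK (Real.sqrt (1 - r^2))
        ≤ 8 / π * (_root_.artanh r) ^ ((1:ℝ)/4) * (1 + Real.log 2 - Real.log r) := by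
          apply mul_le_mul_of_nonneg_left h2 (by positivity)
      _ = 8 / π * ((_root_.artanh r) ^ ((1:ℝ)/4) * (1 + Real.log 2 - Real.log r)) := by ring
      _ < 8 / π * (π^2/4) := by
          apply mul_lt_mul_of_pos_left h3 (by positivity)
      _ = 2 * π := by field_simp; ring
      _ ≤ 4 * ellK r := by linarith
  · -- case B
    have hT1 : 1 < _root_.artanh r := by
      have h08 : (1:ℝ) < _root_.artanh (4/5) := by
        unfold _root_.artanh
        have h9 : ((1:ℝ) + 4/5) / (1 - 4/5) = 9 := by norm_num
        rw [h9]
        have h3 : Real.exp 1 < 3 := by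
          have := Real.exp_one_lt_d9
          linarith
        have hlog3 : 1 < Real.log 3 := by
          rw [Real.lt_log_iff_exp_lt (by norm_num)]
          exact h3
        have h93 : Real.log 9 = 2 * Real.log 3 := by
          rw [show (9:ℝ) = 3^2 by norm_num, Real.log_pow]
          push_cast; ring
        rw [h93]; linarith
      exact lt_of_lt_of_le h08 (artanh_mono (by norm_num) hc.le hr1)
    have hlow : _root_.artanh r / r ≤ ellK r := ellK_ge_artanh hr0 hr1
    have hup : ellK (Real.sqrt (1 - r^2)) ≤ π/2 * (1/r) := by
      have := ellK_le_simple hkk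
      rw [hk2] at this
      have hs : Real.sqrt (1 - (1 - r^2)) = r := by
        rw [show 1 - (1 - r^2) = r^2 by ring, Real.sqrt_sq hr0.le]
      rw [hs] at this
      exact this
    have hq : (_root_.artanh r) ^ ((1:ℝ)/4) < _root_.artanh r := by
      have h := Real.rpow_lt_rpow_of_exponent_lt hT1 (by norm_num : (1:ℝ)/4 < 1)
      rwa [Real.rpow_one] at h
    calc 8 / π * (_root_.artanh r) ^ ((1:ℝ)/4) * ellK (Real.sqrt (1 - r^2))
        ≤ 8 / π * (_root_.artanh r) ^ ((1:ℝ)/4) * (π/2 * (1/r)) := by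
          apply mul_le_mul_of_nonneg_left hup (by positivity)
      _ = 4 * ((_root_.artanh r) ^ ((1:ℝ)/4) / r) := by field_simp; ring
      _ < 4 * (_root_.artanh r / r) := by
          apply mul_lt_mul_of_pos_left ((div_lt_div_iff_of_pos_right hr0).mpr hq) (by norm_num)
      _ ≤ 4 * ellK r := by linarith

lemma disk_lt {x y : ℂ} (hx : ‖x‖ < 1) (hy : ‖y‖ < 1) (hxy : x ≠ y) :
    0 < ‖x - y‖ / ‖1 - (starRingEnd ℂ) x * y‖ ∧
    ‖x - y‖ / ‖1 - (starRingEnd ℂ) x * y‖ < 1 := by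
  have hid : ‖1 - (starRingEnd ℂ) x * y‖^2 - ‖x - y‖^2
      = (1 - ‖x‖^2) * (1 - ‖y‖^2) := by
    rw [Complex.sq_norm, Complex.sq_norm, Complex.sq_norm, Complex.sq_norm]
    simp only [Complex.normSq_apply, Complex.sub_re, Complex.sub_im, Complex.mul_re,
      Complex.mul_im, Complex.one_re, Complex.one_im, Complex.conj_re, Complex.conj_im]
    ring
  have hxn : 0 ≤ ‖x‖ := norm_nonneg x
  have hyn : 0 ≤ ‖y‖ := norm_nonneg y
  have hpos : 0 < (1 - ‖x‖^2) * (1 - ‖y‖^2) :=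
    mul_pos (by nlinarith) (by nlinarith)
  have habs : ‖x - y‖ < ‖1 - (starRingEnd ℂ) x * y‖ := by
    nlinarith [norm_nonneg (x - y), norm_nonneg (1 - (starRingEnd ℂ) x * y)]
  have hnum : 0 < ‖x - y‖ := norm_pos_iff.mpr (sub_ne_zero.mpr hxy)
  refine ⟨div_pos hnum (lt_trans hnum habs), ?_⟩
  rw [div_lt_one (lt_trans hnum habs)]
  exact habs

theorem modulus_metric_lower_bound :
    (∀ r : ℝ, 0 < r → r < 1 →
      2 * Real.pi / Gmu r > (8 / Real.pi) * (_root_.artanh r) ^ ((1 : ℝ) / 4)) ∧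
    (∀ x y : ℂ, ‖x‖ < 1 → ‖y‖ < 1 → x ≠ y →
      2 * Real.pi / Gmu (‖x - y‖ / ‖1 - (starRingEnd ℂ) x * y‖) ≥
        (8 / (Real.pi * (2 : ℝ) ^ ((1 : ℝ) / 4))) *
          (2 * _root_.artanh (‖x - y‖ / ‖1 - (starRingEnd ℂ) x * y‖)) ^
            ((1 : ℝ) / 4)) := by
  constructor
  · exact part1
  · intro x y hx hy hxy
    obtain ⟨hs0, hs1⟩ := disk_lt hx hy hxy
    set s := ‖x - y‖ / ‖1 - (starRingEnd ℂ) x * y‖ with hs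
    have h := part1 s hs0 hs1
    have hTn : 0 ≤ _root_.artanh s := _root_.artanh_nonneg hs0.le hs1
    have hrw : (8 / (Real.pi * (2:ℝ) ^ ((1:ℝ)/4))) * (2 * _root_.artanh s) ^ ((1:ℝ)/4)
        = (8 / Real.pi) * (_root_.artanh s) ^ ((1:ℝ)/4) := by
      rw [Real.mul_rpow (by norm_num) hTn]
      have h2 : ((2:ℝ)) ^ ((1:ℝ)/4) ≠ 0 := ne_of_gt (Real.rpow_pos_of_pos (by norm_num) _)
      have hpi : Real.pi ≠ 0 := Real.pi_ne_zero
      field_simp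
    rw [ge_iff_le, hrw]
    exact le_of_lt h
end

section
/- For all distinct points x, y in the unit disk 𝔹² ⊂ ℂ with x ≠ −y, one has 2|x − y|/√(4 − 8⟨x, y⟩ + (|x|² + |y|²)²) ≤ |x − y|/|1 − x̄y|, with equality if and only if |x| = |y|. -/
open Real Filter Set

theorem midpoint_rotation_lower_bound (x y : ℂ)
    (hx : ‖x‖ < 1) (hy : ‖y‖ < 1) (hxy : x ≠ y) (hxy' : x ≠ -y) :
    2 * ‖x - y‖ /
        Real.sqrt (4 - 8 * ((starRingEnd ℂ) x * y).re +
          ((‖x‖) ^ 2 + (‖y‖) ^ 2) ^ 2) ≤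
      ‖x - y‖ / ‖1 - (starRingEnd ℂ) x * y‖ ∧
    (2 * ‖x - y‖ /
        Real.sqrt (4 - 8 * ((starRingEnd ℂ) x * y).re +
          ((‖x‖) ^ 2 + (‖y‖) ^ 2) ^ 2) =
      ‖x - y‖ / ‖1 - (starRingEnd ℂ) x * y‖ ↔
        ‖x‖ = ‖y‖) := by
  set A := ‖x - y‖ with hA
  set c := ‖1 - (starRingEnd ℂ) x * y‖ with hc
  set a := ‖x‖ with ha
  set b := ‖y‖ with hb
  have hA0 : 0 < A := by
    rw [hA]
    simpa [sub_eq_zero] using hxy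
  have hc0 : 0 < c := by
    rw [hc]
    have : (starRingEnd ℂ) x * y ≠ 1 := by
      intro h
      have := congrArg norm h
      rw [norm_mul, Complex.norm_conj, norm_one] at this
      nlinarith [norm_nonneg x, norm_nonneg y]
    simpa [sub_eq_zero] using fun h => this h.symm
  -- key identity: c^2 = 1 - 2 Re(x̄y) + a²b²
  have hkey : c ^ 2 = 1 - 2 * ((starRingEnd ℂ) x * y).re + a ^ 2 * b ^ 2 := by
    rw [hc, ha, hb, Complex.sq_norm, Complex.sq_norm, Complex.sq_norm]
    simp [Complex.normSq_apply, Complex.sub_re, Complex.sub_im, Complex.mul_re,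
      Complex.mul_im]
    ring
  have hD : 4 - 8 * ((starRingEnd ℂ) x * y).re + (a ^ 2 + b ^ 2) ^ 2
      = 4 * c ^ 2 + (a ^ 2 - b ^ 2) ^ 2 := by
    rw [hkey]; ring
  have hsq : Real.sqrt (4 * c ^ 2) = 2 * c := by
    rw [show 4 * c ^ 2 = (2 * c) ^ 2 by ring, Real.sqrt_sq (by positivity)]
  have h2c : 2 * c ≤ Real.sqrt (4 * c ^ 2 + (a ^ 2 - b ^ 2) ^ 2) := by
    rw [← hsq]
    exact Real.sqrt_le_sqrt (by nlinarith [sq_nonneg (a ^ 2 - b ^ 2)])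
  have hS0 : 0 < Real.sqrt (4 * c ^ 2 + (a ^ 2 - b ^ 2) ^ 2) := by
    positivity
  constructor
  · rw [hD, div_le_div_iff₀ hS0 hc0]
    have := h2c
    nlinarith
  · rw [hD, div_eq_div_iff (ne_of_gt hS0) (ne_of_gt hc0)]
    constructor
    · intro h
      have h2 : Real.sqrt (4 * c ^ 2 + (a ^ 2 - b ^ 2) ^ 2) = 2 * c := by
        nlinarith
      have h3 : 4 * c ^ 2 + (a ^ 2 - b ^ 2) ^ 2 = (2 * c) ^ 2 := by
        have := Real.sq_sqrt (by positivity :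
          (0:ℝ) ≤ 4 * c ^ 2 + (a ^ 2 - b ^ 2) ^ 2)
        rw [h2] at this
        linarith [this]
      have h4 : (a ^ 2 - b ^ 2) ^ 2 = 0 := by nlinarith
      have h5 : a ^ 2 = b ^ 2 := by nlinarith
      have : a = b := by
        have ha0 : 0 ≤ a := norm_nonneg x
        have hb0 : 0 ≤ b := norm_nonneg y
        nlinarith
      exact this
    · intro h
      rw [show (a ^ 2 - b ^ 2) ^ 2 = 0 by rw [h]; ring, add_zero, hsq]
      ring
end

section
/- Let k, d ∈ (0, 1) and for ν ∈ [0, π/2] set x(ν) = k + d·e^{iν} and y(ν) = k − d·e^{iν} (so that x(ν), y(ν) have Euclidean midpoint k and |x(ν) − y(ν)| = 2d). Then |x(ν) − y(ν)|/|1 − conj(x(ν))·y(ν)| = 2d/√((1 + d² − k²)² + 4k²d²·sin²ν), and this quantity is strictly decreasing as a function of ν on [0, π/2]; in particular it attains its maximum 2d/(1 + d² − k²) at ν = 0 and its minimum 2d/√((1 + d² − k²)² + 4k²d²) at ν = π/2. -/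
open Real Filter Set

theorem euclidean_midpoint_rotation (k d : ℝ) (hk0 : 0 < k) (hk1 : k < 1)
    (hd0 : 0 < d) (hd1 : d < 1) :
    (∀ ν ∈ Set.Icc 0 (Real.pi / 2),
      ‖((k : ℂ) + d * Complex.exp (ν * Complex.I)) -
          ((k : ℂ) - d * Complex.exp (ν * Complex.I))‖ /
        ‖1 - (starRingEnd ℂ) ((k : ℂ) + d * Complex.exp (ν * Complex.I)) *
          ((k : ℂ) - d * Complex.exp (ν * Complex.I))‖ =
        2 * d / Real.sqrt ((1 + d ^ 2 - k ^ 2) ^ 2 + 4 * k ^ 2 * d ^ 2 * Real.sin ν ^ 2)) ∧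
    StrictAntiOn (fun ν : ℝ =>
      2 * d / Real.sqrt ((1 + d ^ 2 - k ^ 2) ^ 2 + 4 * k ^ 2 * d ^ 2 * Real.sin ν ^ 2))
      (Set.Icc 0 (Real.pi / 2)) ∧
    (2 * d / Real.sqrt ((1 + d ^ 2 - k ^ 2) ^ 2 + 4 * k ^ 2 * d ^ 2 * Real.sin (0 : ℝ) ^ 2) =
      2 * d / (1 + d ^ 2 - k ^ 2)) ∧
    (2 * d / Real.sqrt
        ((1 + d ^ 2 - k ^ 2) ^ 2 + 4 * k ^ 2 * d ^ 2 * Real.sin (Real.pi / 2) ^ 2) =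
      2 * d / Real.sqrt ((1 + d ^ 2 - k ^ 2) ^ 2 + 4 * k ^ 2 * d ^ 2)) := by
  have hA : 0 < 1 + d ^ 2 - k ^ 2 := by nlinarith
  refine ⟨?_, ?_, ?_, ?_⟩
  · intro ν _
    have h1 : (((k : ℂ) + d * Complex.exp (ν * Complex.I)) -
        ((k : ℂ) - d * Complex.exp (ν * Complex.I))) =
        2 * d * Complex.exp (ν * Complex.I) := by ring
    have h2 : (1 - (starRingEnd ℂ) ((k : ℂ) + d * Complex.exp (ν * Complex.I)) *
        ((k : ℂ) - d * Complex.exp (ν * Complex.I))) =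
        Complex.mk (1 + d ^ 2 - k ^ 2) (2 * k * d * Real.sin ν) := by
      rw [Complex.exp_mul_I]
      apply Complex.ext <;>
        simp [Complex.cos_ofReal_re, Complex.sin_ofReal_re] <;> ring_nf <;>
        nlinarith [Real.sin_sq_add_cos_sq ν]
    rw [h1, h2]
    rw [norm_mul, norm_mul, Complex.norm_exp]
    simp only [Complex.mul_I_re, Complex.ofReal_im, neg_zero, Real.exp_zero, mul_one]
    congr 1
    · simp [Complex.norm_real, abs_of_pos hd0, abs_of_pos (by norm_num : (0:ℝ) < 2)]
    · rw [Complex.norm_def, Complex.normSq_mk]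
      congr 1
      ring
  · intro a ha b hb hab
    have hsub : Set.Icc (0:ℝ) (Real.pi/2) ⊆ Set.Icc (-(Real.pi/2)) (Real.pi/2) :=
      Set.Icc_subset_Icc (by linarith [Real.pi_pos]) le_rfl
    have hs : Real.sin a < Real.sin b :=
      Real.strictMonoOn_sin (hsub ha) (hsub hb) hab
    have hsa : 0 ≤ Real.sin a := Real.sin_nonneg_of_nonneg_of_le_pi ha.1
      (le_trans ha.2 (by linarith [Real.pi_pos]))
    have hsq : Real.sin a ^ 2 < Real.sin b ^ 2 := by nlinarith
    have hlt : (1 + d ^ 2 - k ^ 2) ^ 2 + 4 * k ^ 2 * d ^ 2 * Real.sin a ^ 2 <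
        (1 + d ^ 2 - k ^ 2) ^ 2 + 4 * k ^ 2 * d ^ 2 * Real.sin b ^ 2 := by
      have := mul_lt_mul_of_pos_left hsq (show (0:ℝ) < 4 * k ^ 2 * d ^ 2 by positivity)
      linarith
    have hpos : 0 < (1 + d ^ 2 - k ^ 2) ^ 2 + 4 * k ^ 2 * d ^ 2 * Real.sin a ^ 2 := by
      have t1 : 0 < (1 + d ^ 2 - k ^ 2) ^ 2 := pow_pos hA 2
      have t2 : 0 ≤ 4 * k ^ 2 * d ^ 2 * Real.sin a ^ 2 := by positivity
      linarith
    have h1 : 0 < Real.sqrt ((1 + d ^ 2 - k ^ 2) ^ 2 + 4 * k ^ 2 * d ^ 2 * Real.sin a ^ 2) :=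
      Real.sqrt_pos.mpr hpos
    have h2 := Real.sqrt_lt_sqrt (le_of_lt hpos) hlt
    exact div_lt_div_of_pos_left (by linarith) h1 h2
  · rw [Real.sin_zero]
    norm_num
    rw [Real.sqrt_sq (le_of_lt hA)]
  · rw [Real.sin_pi_div_two]
    norm_num
end

section
/- Let x, y be distinct points in the unit disk 𝔹² ⊂ ℂ with x ≠ −y and |x + y| + |x − y| < 2. Then μ(|x − y|/(1 − ⟨x, y⟩)) ≤ μ(|x − y|/|1 − x̄y|) ≤ μ(2|x − y|/√(4 − 8⟨x, y⟩ + (|x|² + |y|²)²)); equivalently, in terms of the modulus metric μ_{𝔹²}(x, y) = 2π/μ(|x − y|/|1 − x̄y|), one has 2π/μ(2|x − y|/√(4 − 8⟨x, y⟩ + (|x|² + |y|²)²)) ≤ μ_{𝔹²}(x, y) ≤ 2π/μ(|x − y|/(1 − ⟨x, y⟩)). -/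
open Real Filter Set

lemma ellK_integrable {k : ℝ} (hk : k ^ 2 < 1) :
    IntervalIntegrable (fun x : ℝ => 1 / Real.sqrt ((1 - x ^ 2) * (1 - k ^ 2 * x ^ 2)))
      MeasureTheory.volume 0 1 := by
  have hbase : IntervalIntegrable (fun x : ℝ => x ^ (-(1/2) : ℝ)) MeasureTheory.volume 0 1 :=
    intervalIntegral.intervalIntegrable_rpow' (by norm_num)
  have hcomp : IntervalIntegrable (fun x : ℝ => (1 - x) ^ (-(1/2) : ℝ))
      MeasureTheory.volume 0 1 := by
    simpa using (hbase.comp_sub_left 1).symm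
  have hk2 : 0 < 1 - k ^ 2 := by linarith
  have hbound : IntervalIntegrable
      (fun x : ℝ => (1 / Real.sqrt (1 - k ^ 2)) * (1 - x) ^ (-(1/2) : ℝ))
      MeasureTheory.volume 0 1 := hcomp.const_mul _
  refine hbound.mono_fun' ?_ ?_
  · apply Measurable.aestronglyMeasurable
    fun_prop
  · filter_upwards [MeasureTheory.ae_restrict_mem measurableSet_Ioc] with t ht
    obtain ⟨ht0, ht1⟩ := ht
    simp only [min_eq_left (zero_le_one' ℝ), max_eq_right (zero_le_one' ℝ)] at ht0 ht1
    have ht2 : t ^ 2 ≤ 1 := by nlinarith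
    have hk2t : k ^ 2 * t ^ 2 ≤ k ^ 2 := by
      nlinarith [mul_nonneg (sq_nonneg k) (by linarith : (0:ℝ) ≤ 1 - t ^ 2)]
    have hP : 0 ≤ (1 - t ^ 2) * (1 - k ^ 2 * t ^ 2) :=
      mul_nonneg (by linarith) (by linarith)
    have hnorm : ‖1 / Real.sqrt ((1 - t ^ 2) * (1 - k ^ 2 * t ^ 2))‖
        = 1 / Real.sqrt ((1 - t ^ 2) * (1 - k ^ 2 * t ^ 2)) := by
      rw [Real.norm_eq_abs, abs_of_nonneg]
      positivity
    rw [hnorm]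
    rcases eq_or_lt_of_le ht1 with h1 | h1
    · subst h1
      simp [Real.zero_rpow, Real.sqrt_eq_zero']
    · have h1t : 0 < 1 - t := by linarith
      have hQ : (0:ℝ) < (1 - t) * (1 - k ^ 2) := by positivity
      have htt : t ^ 2 ≤ t := by nlinarith
      have hle : (1 - t) * (1 - k ^ 2) ≤ (1 - t ^ 2) * (1 - k ^ 2 * t ^ 2) :=
        mul_le_mul (by linarith) (by linarith) (by linarith) (by linarith)
      have key : 1 / Real.sqrt ((1 - t ^ 2) * (1 - k ^ 2 * t ^ 2))
          ≤ 1 / Real.sqrt ((1 - t) * (1 - k ^ 2)) :=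
        one_div_le_one_div_of_le (Real.sqrt_pos.2 hQ) (Real.sqrt_le_sqrt hle)
      refine key.trans (le_of_eq ?_)
      rw [Real.sqrt_mul h1t.le, Real.rpow_neg h1t.le, ← Real.sqrt_eq_rpow]
      rw [one_div, mul_inv]
      rw [mul_comm]
      rw [one_div]
  
lemma one_le_ellK {k : ℝ} (hk : k ^ 2 < 1) : 1 ≤ ellK k := by
  have h1 : (1:ℝ) = ∫ x in (0:ℝ)..1, (1:ℝ) := by simp
  rw [h1, ellK]
  refine intervalIntegral.integral_mono_ae_restrict (zero_le_one' ℝ)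
    (intervalIntegrable_const) (ellK_integrable hk) ?_
  have hne : ∀ᵐ x : ℝ ∂MeasureTheory.volume, x ≠ 1 := by
    rw [MeasureTheory.ae_iff]
    convert Real.volume_singleton (a := 1) using 2
    ext t; simp
  have hne' := MeasureTheory.ae_restrict_of_ae
    (μ := MeasureTheory.volume) (s := Set.Icc (0:ℝ) 1) hne
  have hmem := MeasureTheory.ae_restrict_mem
    (μ := MeasureTheory.volume) (measurableSet_Icc (a := (0:ℝ)) (b := 1))
  filter_upwards [hne', hmem] with t htne htmem
  obtain ⟨ht0, ht1⟩ := htmem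
  have ht1' : t < 1 := lt_of_le_of_ne ht1 htne
  have ht2 : t ^ 2 < 1 := by nlinarith
  have hkt : k ^ 2 * t ^ 2 < 1 := by nlinarith [sq_nonneg k, sq_nonneg t]
  have hP : 0 < (1 - t ^ 2) * (1 - k ^ 2 * t ^ 2) := by nlinarith [sq_nonneg (k*t)]
  have hP1 : (1 - t ^ 2) * (1 - k ^ 2 * t ^ 2) ≤ 1 := by nlinarith [sq_nonneg (k*t)]
  have hs : Real.sqrt ((1 - t ^ 2) * (1 - k ^ 2 * t ^ 2)) ≤ 1 := by
    have := Real.sqrt_le_sqrt hP1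
    simpa using this
  rw [le_div_iff₀ (Real.sqrt_pos.2 hP), one_mul]
  simpa using hs

lemma ellK_mono {k₁ k₂ : ℝ} (h0 : 0 ≤ k₁) (h12 : k₁ ≤ k₂) (h2 : k₂ < 1) :
    ellK k₁ ≤ ellK k₂ := by
  have hk1 : k₁ ^ 2 < 1 := by nlinarith
  have hk2 : k₂ ^ 2 < 1 := by nlinarith
  refine intervalIntegral.integral_mono_on (zero_le_one' ℝ)
    (ellK_integrable hk1) (ellK_integrable hk2) fun t ht => ?_
  obtain ⟨ht0, ht1⟩ := ht
  rcases eq_or_lt_of_le ht1 with h1 | h1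
  · subst h1; simp
  · have ht2 : t ^ 2 < 1 := by nlinarith
    have h2a : (0:ℝ) < 1 - t ^ 2 := by linarith
    have hk22 : k₂ ^ 2 * t ^ 2 ≤ k₂ ^ 2 := by
      nlinarith [mul_nonneg (sq_nonneg k₂) (by nlinarith : (0:ℝ) ≤ 1 - t ^ 2)]
    have h2b : (0:ℝ) < 1 - k₂ ^ 2 * t ^ 2 := by linarith
    have hP2 : 0 < (1 - t ^ 2) * (1 - k₂ ^ 2 * t ^ 2) := mul_pos h2a h2b
    have hk12 : k₁ ^ 2 * t ^ 2 ≤ k₂ ^ 2 * t ^ 2 := by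
      have : k₁ ^ 2 ≤ k₂ ^ 2 := by nlinarith
      nlinarith [sq_nonneg t]
    have hle : (1 - t ^ 2) * (1 - k₂ ^ 2 * t ^ 2) ≤ (1 - t ^ 2) * (1 - k₁ ^ 2 * t ^ 2) := by
      apply mul_le_mul_of_nonneg_left _ h2a.le
      linarith
    exact one_div_le_one_div_of_le (Real.sqrt_pos.2 hP2) (Real.sqrt_le_sqrt hle)

lemma Gmu_pos {r : ℝ} (h0 : 0 < r) (h1 : r < 1) : 0 < Gmu r := by
  have hr2 : r ^ 2 < 1 := by nlinarith
  have hc2 : (Real.sqrt (1 - r ^ 2)) ^ 2 < 1 := by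
    rw [Real.sq_sqrt (by nlinarith : (0:ℝ) ≤ 1 - r ^ 2)]
    nlinarith
  have h1' := one_le_ellK hr2
  have h2' := one_le_ellK hc2
  refine div_pos (mul_pos (by positivity) (by linarith)) (by linarith)

lemma Gmu_anti {r s : ℝ} (hr : 0 < r) (hrs : r ≤ s) (hs : s < 1) : Gmu s ≤ Gmu r := by
  have hr1 : r < 1 := lt_of_le_of_lt hrs hs
  have hs0 : 0 < s := lt_of_lt_of_le hr hrs
  have hr2 : r ^ 2 < 1 := by nlinarith
  have hs2 : s ^ 2 < 1 := by nlinarith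
  have hcr : (0:ℝ) ≤ 1 - r ^ 2 := by nlinarith
  have hcs : (0:ℝ) ≤ 1 - s ^ 2 := by nlinarith
  have hcr2 : (Real.sqrt (1 - r ^ 2)) ^ 2 < 1 := by
    rw [Real.sq_sqrt hcr]; nlinarith
  have hcs2 : (Real.sqrt (1 - s ^ 2)) ^ 2 < 1 := by
    rw [Real.sq_sqrt hcs]; nlinarith
  have hsqrt1 : Real.sqrt (1 - r ^ 2) < 1 := by
    nlinarith [Real.sqrt_nonneg (1 - r ^ 2), hcr2]
  have hK : ellK r ≤ ellK s := ellK_mono hr.le hrs hs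
  have hKr : 1 ≤ ellK r := one_le_ellK hr2
  have hA : ellK (Real.sqrt (1 - s ^ 2)) ≤ ellK (Real.sqrt (1 - r ^ 2)) :=
    ellK_mono (Real.sqrt_nonneg _) (Real.sqrt_le_sqrt (by nlinarith)) hsqrt1
  have hAs : 1 ≤ ellK (Real.sqrt (1 - s ^ 2)) := one_le_ellK hcs2
  have hAr0 : (0:ℝ) ≤ ellK (Real.sqrt (1 - r ^ 2)) :=
    le_trans zero_le_one (one_le_ellK hcr2)
  unfold Gmu
  refine div_le_div₀ (mul_nonneg (by positivity) hAr0) ?_ (by linarith) hK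
  have hpi : (0:ℝ) ≤ Real.pi / 2 := by positivity
  exact mul_le_mul_of_nonneg_left hA hpi

theorem modulus_metric_rotation_bounds (x y : ℂ)
    (hx : ‖x‖ < 1) (hy : ‖y‖ < 1) (hxy : x ≠ y) (hxy' : x ≠ -y)
    (h : ‖x + y‖ + ‖x - y‖ < 2) :
    (Gmu (‖x - y‖ / (1 - ((starRingEnd ℂ) x * y).re)) ≤
        Gmu (‖x - y‖ / ‖1 - (starRingEnd ℂ) x * y‖) ∧
      Gmu (‖x - y‖ / ‖1 - (starRingEnd ℂ) x * y‖) ≤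
        Gmu (2 * ‖x - y‖ /
          Real.sqrt (4 - 8 * ((starRingEnd ℂ) x * y).re +
            ((‖x‖) ^ 2 + (‖y‖) ^ 2) ^ 2))) ∧
    (2 * Real.pi / Gmu (2 * ‖x - y‖ /
        Real.sqrt (4 - 8 * ((starRingEnd ℂ) x * y).re +
          ((‖x‖) ^ 2 + (‖y‖) ^ 2) ^ 2)) ≤
      2 * Real.pi / Gmu (‖x - y‖ / ‖1 - (starRingEnd ℂ) x * y‖) ∧
      2 * Real.pi / Gmu (‖x - y‖ / ‖1 - (starRingEnd ℂ) x * y‖) ≤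
        2 * Real.pi / Gmu (‖x - y‖ / (1 - ((starRingEnd ℂ) x * y).re))) := by
  set d := ‖x - y‖ with hd
  set s := ‖x + y‖ with hs
  set R := ((starRingEnd ℂ) x * y).re with hR
  set A := ‖1 - (starRingEnd ℂ) x * y‖ with hA
  set D := 4 - 8 * R + ((‖x‖) ^ 2 + (‖y‖) ^ 2) ^ 2 with hD
  have hd0 : 0 < d := by
    rw [hd]
    exact norm_pos_iff.2 (sub_ne_zero.2 hxy)
  have hs0 : 0 ≤ s := norm_nonneg _
  -- identity: s² = d² + 4R
  have hiden : s ^ 2 = d ^ 2 + 4 * R := by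
    rw [hs, hd, hR, Complex.sq_norm, Complex.sq_norm]
    simp only [Complex.normSq_apply, Complex.add_re, Complex.add_im, Complex.sub_re,
      Complex.sub_im, Complex.mul_re, Complex.mul_im, Complex.conj_re, Complex.conj_im]
    ring
  have h1R : d < 1 - R := by
    have h2 : (0:ℝ) < 2 - d - s := by linarith
    have h3 : (0:ℝ) < 2 - d + s := by linarith
    nlinarith [mul_pos h2 h3]
  have h1Rpos : 0 < 1 - R := lt_trans hd0 h1R
  have hRA : 1 - R ≤ A := by
    have := Complex.re_le_norm (1 - (starRingEnd ℂ) x * y)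
    simpa [Complex.sub_re, hR] using this
  have hA0 : 0 < A := lt_of_lt_of_le h1Rpos hRA
  -- second identity: A² relation
  have hxyabs : (‖x‖) ^ 2 * (‖y‖) ^ 2
      = R ^ 2 + ((starRingEnd ℂ) x * y).im ^ 2 := by
    have h1 : (‖x‖) ^ 2 * (‖y‖) ^ 2
        = (‖(starRingEnd ℂ) x * y‖) ^ 2 := by
      rw [norm_mul, Complex.norm_conj, mul_pow]
    rw [h1, Complex.sq_norm, Complex.normSq_apply, hR]
    ring
  have hA2 : A ^ 2 = 1 - 2 * R + (‖x‖) ^ 2 * (‖y‖) ^ 2 := by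
    rw [hA, Complex.sq_norm, Complex.normSq_apply, hxyabs]
    simp only [Complex.sub_re, Complex.sub_im, Complex.one_re, Complex.one_im, hR]
    ring
  have hDA : 4 * A ^ 2 ≤ D := by
    rw [hD, hA2]
    nlinarith [sq_nonneg ((‖x‖) ^ 2 - (‖y‖) ^ 2)]
  have hD0 : 0 < D := by nlinarith
  have hsqD : 2 * A ≤ Real.sqrt D := by
    rw [Real.le_sqrt (by positivity) hD0.le]
    nlinarith
  have hsqD0 : 0 < Real.sqrt D := Real.sqrt_pos.2 hD0
  -- the three arguments
  have hb1 : d / (1 - R) < 1 := (div_lt_one h1Rpos).2 h1R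
  have hmb : d / A ≤ d / (1 - R) := div_le_div_of_nonneg_left hd0.le h1Rpos hRA
  have hm0 : 0 < d / A := div_pos hd0 hA0
  have htm : 2 * d / Real.sqrt D ≤ d / A := by
    have h1 : 2 * d / Real.sqrt D ≤ 2 * d / (2 * A) :=
      div_le_div_of_nonneg_left (by positivity) (by positivity) hsqD
    have h2 : 2 * d / (2 * A) = d / A := by
      rw [mul_div_mul_left d A (two_ne_zero)]
    linarith [h1, h2.le]
  have ht0 : 0 < 2 * d / Real.sqrt D := by positivity
  have hm1 : d / A < 1 := lt_of_le_of_lt hmb hb1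
  have G1 : Gmu (d / (1 - R)) ≤ Gmu (d / A) := Gmu_anti hm0 hmb hb1
  have G2 : Gmu (d / A) ≤ Gmu (2 * d / Real.sqrt D) := Gmu_anti ht0 htm hm1
  have P1 : 0 < Gmu (d / (1 - R)) := Gmu_pos (div_pos hd0 h1Rpos) hb1
  have P2 : 0 < Gmu (d / A) := Gmu_pos hm0 hm1
  refine ⟨⟨G1, G2⟩, ?_, ?_⟩
  · exact div_le_div_of_nonneg_left (by positivity) P2 G2
  · exact div_le_div_of_nonneg_left (by positivity) P1 G1
end

section
/- For every w > 0, the quotient (2π/μ(r))/r^w tends to infinity as r → 0+; equivalently, r^w·μ(r) → 0 as r → 0+. Consequently, the modulus metric of the unit disk is not Hölder continuous with respect to the Euclidean metric: there exist no constants C > 0 and w > 0 such that 2π/μ(|x|) ≤ C·|x|^w for all x in the punctured unit disk. -/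
open Real Filter Set

namespace NotHolderAux

noncomputable def F (k : ℝ) : ℝ → ℝ :=
  fun x => 1 / Real.sqrt ((1 - x ^ 2) * (1 - k ^ 2 * x ^ 2))

lemma F_nonneg (k x : ℝ) : 0 ≤ F k x := by
  unfold F; positivity

lemma F_measurable (k : ℝ) : Measurable (F k) := by
  have : F k = fun x => (Real.sqrt ((1 - x ^ 2) * (1 - k ^ 2 * x ^ 2)))⁻¹ := by
    funext x; simp [F, one_div]
  rw [this]
  exact (Real.continuous_sqrt.comp (by continuity)).measurable.inv

/-- pointwise upper bound -/
lemma F_le {k θ : ℝ} (hk0 : 0 ≤ k) (hk1 : k < 1) (hθ0 : 0 ≤ θ) (hθ1 : θ < 1)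
    {x : ℝ} (hx0 : 0 ≤ x) (hx1 : x ≤ 1) :
    F k x ≤ (1 - k ^ 2) ^ (-(1 - θ) / 2) * (1 - x) ^ (-(1 + θ) / 2) := by
  have hc : (0:ℝ) < 1 - k ^ 2 := by nlinarith
  rcases eq_or_lt_of_le hx1 with rfl | hx1'
  · have h1 : ((1:ℝ) - 1 ^ 2) = 0 := by norm_num
    have : F k 1 = 0 := by simp [F, h1]
    rw [this, show (1:ℝ) - 1 = 0 by norm_num,
      Real.zero_rpow (ne_of_lt (by linarith : -(1 + θ) / 2 < 0)), mul_zero]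
  · have hb : (0:ℝ) < 1 - x ^ 2 := by nlinarith
    have ha : (0:ℝ) < 1 - k ^ 2 * x ^ 2 := by nlinarith
    have hba : 1 - x ^ 2 ≤ 1 - k ^ 2 * x ^ 2 := by nlinarith
    have hca : 1 - k ^ 2 ≤ 1 - k ^ 2 * x ^ 2 := by nlinarith
    -- geometric mean bound
    have hkey : (1 - x ^ 2) ^ θ * (1 - k ^ 2) ^ (1 - θ) ≤ 1 - k ^ 2 * x ^ 2 := by
      rcases le_total (1 - x ^ 2) (1 - k ^ 2) with h | h
      · calc (1 - x ^ 2) ^ θ * (1 - k ^ 2) ^ (1 - θ)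
            ≤ (1 - k ^ 2) ^ θ * (1 - k ^ 2) ^ (1 - θ) := by
              gcongr <;> first | exact hb.le | exact hc.le | linarith
          _ = (1 - k ^ 2) ^ (θ + (1 - θ)) := (Real.rpow_add hc _ _).symm
          _ = 1 - k ^ 2 := by norm_num
          _ ≤ 1 - k ^ 2 * x ^ 2 := hca
      · calc (1 - x ^ 2) ^ θ * (1 - k ^ 2) ^ (1 - θ)
            ≤ (1 - x ^ 2) ^ θ * (1 - x ^ 2) ^ (1 - θ) := by
              gcongr <;> first | exact hb.le | exact hc.le | linarith
          _ = (1 - x ^ 2) ^ (θ + (1 - θ)) := (Real.rpow_add hb _ _).symm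
          _ = 1 - x ^ 2 := by norm_num
          _ ≤ 1 - k ^ 2 * x ^ 2 := hba
    have hprod : (1 - x) ^ (1 + θ) * (1 - k ^ 2) ^ (1 - θ)
        ≤ (1 - x ^ 2) * (1 - k ^ 2 * x ^ 2) := by
      have h1 : (1 - x) ^ (1 + θ) ≤ (1 - x ^ 2) ^ (1 + θ) := by
        apply Real.rpow_le_rpow (by linarith) (by nlinarith) (by linarith)
      have h2 : (1 - x ^ 2) ^ (1 + θ) = (1 - x ^ 2) * (1 - x ^ 2) ^ θ := by
        rw [Real.rpow_add hb, Real.rpow_one]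
      calc (1 - x) ^ (1 + θ) * (1 - k ^ 2) ^ (1 - θ)
          ≤ (1 - x ^ 2) ^ (1 + θ) * (1 - k ^ 2) ^ (1 - θ) := by
            gcongr <;> first | positivity | linarith | nlinarith
        _ = (1 - x ^ 2) * ((1 - x ^ 2) ^ θ * (1 - k ^ 2) ^ (1 - θ)) := by
            rw [h2]; ring
        _ ≤ (1 - x ^ 2) * (1 - k ^ 2 * x ^ 2) := by
            apply mul_le_mul_of_nonneg_left hkey hb.le
    have hx' : (0:ℝ) < 1 - x := by linarith
    have hsq : (1 - x) ^ ((1 + θ) / 2) * (1 - k ^ 2) ^ ((1 - θ) / 2)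
        ≤ Real.sqrt ((1 - x ^ 2) * (1 - k ^ 2 * x ^ 2)) := by
      rw [show (1 - x) ^ ((1 + θ) / 2) * (1 - k ^ 2) ^ ((1 - θ) / 2)
          = Real.sqrt ((1 - x) ^ (1 + θ) * (1 - k ^ 2) ^ (1 - θ)) by
        rw [Real.sqrt_mul (by positivity), Real.sqrt_eq_rpow, Real.sqrt_eq_rpow,
          ← Real.rpow_mul hx'.le, ← Real.rpow_mul hc.le]
        ring_nf]
      exact Real.sqrt_le_sqrt hprod
    have hpos : (0:ℝ) < (1 - x) ^ ((1 + θ) / 2) * (1 - k ^ 2) ^ ((1 - θ) / 2) := by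
      positivity
    have := one_div_le_one_div_of_le hpos hsq
    calc F k x ≤ 1 / ((1 - x) ^ ((1 + θ) / 2) * (1 - k ^ 2) ^ ((1 - θ) / 2)) := this
      _ = (1 - k ^ 2) ^ (-(1 - θ) / 2) * (1 - x) ^ (-(1 + θ) / 2) := by
          rw [one_div, mul_inv, ← Real.rpow_neg hx'.le, ← Real.rpow_neg hc.le]
          ring_nf

/-- the dominating function is interval integrable -/
lemma g_intervalIntegrable {p : ℝ} (hp : -1 < p) :
    IntervalIntegrable (fun x => (1 - x) ^ p) MeasureTheory.volume 0 1 := by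
  have h := (intervalIntegral.intervalIntegrable_rpow' (a := (0:ℝ)) (b := 1) hp).comp_sub_left 1
  simpa using h.symm

lemma F_intervalIntegrable {k : ℝ} (hk0 : 0 ≤ k) (hk1 : k < 1) :
    IntervalIntegrable (F k) MeasureTheory.volume 0 1 := by
  have hc : (0:ℝ) < 1 - k ^ 2 := by nlinarith
  have hg : IntervalIntegrable
      (fun x => (1 - k ^ 2) ^ (-(1 - (1/2 : ℝ)) / 2) * (1 - x) ^ (-(1 + (1/2:ℝ)) / 2))
      MeasureTheory.volume 0 1 :=
    (g_intervalIntegrable (by norm_num)).const_mul _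
  apply hg.mono_fun' ((F_measurable k).aestronglyMeasurable)
  rw [Filter.EventuallyLE, MeasureTheory.ae_restrict_iff' measurableSet_uIoc]
  apply Filter.Eventually.of_forall
  intro x hx
  rw [Set.uIoc_of_le (by norm_num : (0:ℝ) ≤ 1)] at hx
  have h1 := F_le hk0 hk1 (by norm_num) (by norm_num : (1/2 : ℝ) < 1) hx.1.le hx.2
  have h2 : ‖F k x‖ = F k x := Real.norm_of_nonneg (F_nonneg k x)
  rw [h2]
  exact h1

lemma ellK_eq (k : ℝ) : ellK k = ∫ x in (0:ℝ)..1, F k x := rfl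

lemma ellK_le {k θ : ℝ} (hk0 : 0 ≤ k) (hk1 : k < 1) (hθ0 : 0 ≤ θ) (hθ1 : θ < 1) :
    ellK k ≤ (1 - k ^ 2) ^ (-(1 - θ) / 2) * (2 / (1 - θ)) := by
  have hc : (0:ℝ) < 1 - k ^ 2 := by nlinarith
  have hp : (-1:ℝ) < -(1 + θ) / 2 := by linarith
  have hgint : IntervalIntegrable (fun x => (1 - x) ^ (-(1 + θ) / 2))
      MeasureTheory.volume 0 1 := g_intervalIntegrable hp
  have hmono : ellK k ≤ ∫ x in (0:ℝ)..1,
      (1 - k ^ 2) ^ (-(1 - θ) / 2) * (1 - x) ^ (-(1 + θ) / 2) := by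
    rw [ellK_eq]
    apply intervalIntegral.integral_mono_on (by norm_num)
      (F_intervalIntegrable hk0 hk1) (hgint.const_mul _)
    intro x hx
    exact F_le hk0 hk1 hθ0 hθ1 hx.1 hx.2
  have hval : (∫ x in (0:ℝ)..1, (1 - x) ^ (-(1 + θ) / 2)) = 2 / (1 - θ) := by
    have h1 : (∫ x in (0:ℝ)..1, (1 - x) ^ (-(1 + θ) / 2))
        = ∫ x in (1-(1:ℝ))..(1-(0:ℝ)), x ^ (-(1 + θ) / 2) := by
      rw [← intervalIntegral.integral_comp_sub_left (fun x => x ^ (-(1 + θ) / 2)) 1]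
    rw [h1]
    simp only [sub_self, sub_zero]
    rw [integral_rpow (Or.inl hp)]
    have hne : -(1 + θ) / 2 + 1 ≠ 0 := ne_of_gt (by linarith)
    rw [Real.one_rpow, Real.zero_rpow hne]
    rw [sub_zero, show -(1 + θ) / 2 + 1 = (1 - θ) / 2 by ring, one_div_div]
  calc ellK k ≤ ∫ x in (0:ℝ)..1,
      (1 - k ^ 2) ^ (-(1 - θ) / 2) * (1 - x) ^ (-(1 + θ) / 2) := hmono
    _ = (1 - k ^ 2) ^ (-(1 - θ) / 2) * (2 / (1 - θ)) := by
        rw [intervalIntegral.integral_const_mul, hval]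

lemma ellK_ge {k : ℝ} (hk0 : 0 ≤ k) (hk1 : k < 1) : 2/3 ≤ ellK k := by
  have hlow : ∀ x ∈ Set.Icc (0:ℝ) 1, 1 - x ^ 2 ≤ F k x := by
    intro x hx
    rcases eq_or_lt_of_le hx.2 with rfl | hx1'
    · simp [F]
    · have hx0 := hx.1
      have hb : (0:ℝ) < 1 - x ^ 2 := by nlinarith
      have ha : (0:ℝ) < 1 - k ^ 2 * x ^ 2 := by nlinarith
      have hle1 : (1 - x ^ 2) * (1 - k ^ 2 * x ^ 2) ≤ 1 := by nlinarith
      have hs1 : Real.sqrt ((1 - x ^ 2) * (1 - k ^ 2 * x ^ 2)) ≤ 1 :=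
        Real.sqrt_le_one.mpr hle1
      have hspos : 0 < Real.sqrt ((1 - x ^ 2) * (1 - k ^ 2 * x ^ 2)) :=
        Real.sqrt_pos.mpr (by positivity)
      have : (1:ℝ) ≤ F k x := by
        rw [show F k x = 1 / Real.sqrt ((1 - x ^ 2) * (1 - k ^ 2 * x ^ 2)) from rfl]
        rw [le_div_iff₀ hspos]
        linarith
      nlinarith [sq_nonneg x]
  have hint : (∫ x in (0:ℝ)..1, (1 - x ^ 2)) = 2/3 := by
    rw [intervalIntegral.integral_sub intervalIntegrable_const
      ((continuous_pow 2).intervalIntegrable 0 1)]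
    simp [integral_pow]
    norm_num
  calc (2:ℝ)/3 = ∫ x in (0:ℝ)..1, (1 - x ^ 2) := hint.symm
    _ ≤ ∫ x in (0:ℝ)..1, F k x := by
        apply intervalIntegral.integral_mono_on (by norm_num)
          (intervalIntegrable_const.sub ((continuous_pow 2).intervalIntegrable 0 1))
          (F_intervalIntegrable hk0 hk1)
        exact hlow
    _ = ellK k := (ellK_eq k).symm

lemma sqrt_mem {r : ℝ} (hr0 : 0 < r) (hr1 : r < 1) :
    0 ≤ Real.sqrt (1 - r ^ 2) ∧ Real.sqrt (1 - r ^ 2) < 1 := by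
  constructor
  · exact Real.sqrt_nonneg _
  · rw [Real.sqrt_lt' one_pos]
    nlinarith

lemma one_sub_sq_sqrt {r : ℝ} (hr0 : 0 < r) (hr1 : r < 1) :
    1 - Real.sqrt (1 - r ^ 2) ^ 2 = r ^ 2 := by
  rw [Real.sq_sqrt (by nlinarith : (0:ℝ) ≤ 1 - r ^ 2)]
  ring

lemma Gmu_pos {r : ℝ} (hr0 : 0 < r) (hr1 : r < 1) : 0 < Gmu r := by
  obtain ⟨hs0, hs1⟩ := sqrt_mem hr0 hr1
  have h1 : (0:ℝ) < ellK (Real.sqrt (1 - r ^ 2)) := lt_of_lt_of_le (by norm_num) (ellK_ge hs0 hs1)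
  have h2 : (0:ℝ) < ellK r := lt_of_lt_of_le (by norm_num) (ellK_ge hr0.le hr1)
  unfold Gmu
  positivity

lemma Gmu_le {r θ : ℝ} (hr0 : 0 < r) (hr1 : r < 1) (hθ0 : 0 ≤ θ) (hθ1 : θ < 1) :
    Gmu r ≤ (3 * Real.pi / (2 * (1 - θ))) * r ^ (-(1 - θ)) := by
  obtain ⟨hs0, hs1⟩ := sqrt_mem hr0 hr1
  have h2 : (2:ℝ)/3 ≤ ellK r := ellK_ge hr0.le hr1
  have h2' : (0:ℝ) < ellK r := lt_of_lt_of_le (by norm_num) h2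
  have h1 : ellK (Real.sqrt (1 - r ^ 2))
      ≤ (r ^ 2) ^ (-(1 - θ) / 2 : ℝ) * (2 / (1 - θ)) := by
    have := ellK_le hs0 hs1 hθ0 hθ1
    rwa [one_sub_sq_sqrt hr0 hr1] at this
  have hrp : (r ^ 2 : ℝ) ^ (-(1 - θ) / 2 : ℝ) = r ^ (-(1 - θ)) := by
    rw [← Real.rpow_natCast r 2, ← Real.rpow_mul hr0.le]
    congr 1
    ring
  rw [hrp] at h1
  have h1' : (0:ℝ) ≤ ellK (Real.sqrt (1 - r ^ 2)) :=
    le_trans (by norm_num) (ellK_ge hs0 hs1)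
  unfold Gmu
  rw [div_le_iff₀ h2']
  have hπ : (0:ℝ) < Real.pi := Real.pi_pos
  have hrw : (0:ℝ) < r ^ (-(1 - θ)) := Real.rpow_pos_of_pos hr0 _
  calc Real.pi / 2 * ellK (Real.sqrt (1 - r ^ 2))
      ≤ Real.pi / 2 * (r ^ (-(1 - θ)) * (2 / (1 - θ))) := by
        apply mul_le_mul_of_nonneg_left h1 (by positivity)
    _ = (3 * Real.pi / (2 * (1 - θ))) * r ^ (-(1 - θ)) * (2/3) := by
        have h1θ : (1:ℝ) - θ ≠ 0 := ne_of_gt (by linarith)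
        field_simp
    _ ≤ (3 * Real.pi / (2 * (1 - θ))) * r ^ (-(1 - θ)) * ellK r := by
        apply mul_le_mul_of_nonneg_left h2
        have : (0:ℝ) < 1 - θ := by linarith
        positivity

lemma part2 (w : ℝ) (hw : 0 < w) :
    Filter.Tendsto (fun r : ℝ => r ^ w * Gmu r)
      (nhdsWithin 0 (Set.Ioi 0)) (nhds 0) := by
  set ε : ℝ := min w 1 / 2 with hε
  have hε0 : 0 < ε := by
    have := lt_min hw one_pos
    positivity
  have hε1 : ε < 1 := by
    have : min w 1 ≤ 1 := min_le_right _ _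
    simp only [hε]
    linarith
  have hεw : ε < w := by
    have : min w 1 ≤ w := min_le_left _ _
    simp only [hε]
    linarith
  set θ : ℝ := 1 - ε with hθ
  have hθ0 : 0 ≤ θ := by simp only [hθ]; linarith
  have hθ1 : θ < 1 := by simp only [hθ]; linarith
  set K : ℝ := 3 * Real.pi / (2 * (1 - θ)) with hK
  have hKpos : 0 < K := by
    have : (0:ℝ) < 1 - θ := by linarith
    have hπ := Real.pi_pos
    positivity
  -- upper bound: r^w * Gmu r ≤ K * r^(w - ε) for r ∈ (0,1)
  have hub : ∀ r ∈ Set.Ioo (0:ℝ) 1, r ^ w * Gmu r ≤ K * r ^ (w - ε) := by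
    intro r hr
    have h := Gmu_le hr.1 hr.2 hθ0 hθ1
    have hrw : (0:ℝ) < r ^ w := Real.rpow_pos_of_pos hr.1 _
    calc r ^ w * Gmu r ≤ r ^ w * (K * r ^ (-(1 - θ))) := by
          apply mul_le_mul_of_nonneg_left _ hrw.le
          simpa [hK] using h
      _ = K * r ^ (w - ε) := by
          rw [show (-(1-θ)) = -ε by simp only [hθ]; ring]
          rw [mul_comm (r ^ w), mul_assoc, ← Real.rpow_add hr.1]
          ring_nf
  have hlb : ∀ r ∈ Set.Ioo (0:ℝ) 1, 0 ≤ r ^ w * Gmu r := by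
    intro r hr
    have := Gmu_pos hr.1 hr.2
    have hrw : (0:ℝ) < r ^ w := Real.rpow_pos_of_pos hr.1 _
    positivity
  -- K * r^(w-ε) → 0
  have htop : Filter.Tendsto (fun r : ℝ => K * r ^ (w - ε))
      (nhdsWithin 0 (Set.Ioi 0)) (nhds 0) := by
    have h0 : Filter.Tendsto (fun r : ℝ => r ^ (w - ε)) (nhds 0) (nhds 0) := by
      have hcont : ContinuousAt (fun r : ℝ => r ^ (w - ε)) 0 :=
        Real.continuousAt_rpow_const 0 (w - ε) (Or.inr (by linarith))
      have := hcont.tendsto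
      rwa [Real.zero_rpow (by linarith : w - ε ≠ 0)] at this
    have h1 := (h0.const_mul K).mono_left
      (nhdsWithin_le_nhds : nhdsWithin (0:ℝ) (Set.Ioi 0) ≤ nhds 0)
    rw [mul_zero] at h1
    exact h1
  apply squeeze_zero' ?_ ?_ htop
  · filter_upwards [Ioo_mem_nhdsGT (by norm_num : (0:ℝ) < 1)] with r hr
    exact hlb r hr
  · filter_upwards [Ioo_mem_nhdsGT (by norm_num : (0:ℝ) < 1)] with r hr
    exact hub r hr

lemma part1 (w : ℝ) (hw : 0 < w) :
    Filter.Tendsto (fun r : ℝ => (2 * Real.pi / Gmu r) / r ^ w)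
      (nhdsWithin 0 (Set.Ioi 0)) Filter.atTop := by
  have h2 := part2 w hw
  have hmem : ∀ᶠ r in nhdsWithin (0:ℝ) (Set.Ioi 0), r ^ w * Gmu r ∈ Set.Ioi (0:ℝ) := by
    filter_upwards [Ioo_mem_nhdsGT (by norm_num : (0:ℝ) < 1)] with r hr
    have := Gmu_pos hr.1 hr.2
    have hrw : (0:ℝ) < r ^ w := Real.rpow_pos_of_pos hr.1 _
    exact mul_pos hrw this
  have h3 : Filter.Tendsto (fun r : ℝ => r ^ w * Gmu r)
      (nhdsWithin 0 (Set.Ioi 0)) (nhdsWithin 0 (Set.Ioi 0)) :=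
    tendsto_nhdsWithin_of_tendsto_nhds_of_eventually_within _ h2 hmem
  have h4 : Filter.Tendsto (fun r : ℝ => (r ^ w * Gmu r)⁻¹)
      (nhdsWithin 0 (Set.Ioi 0)) Filter.atTop :=
    tendsto_inv_nhdsGT_zero.comp h3
  have h5 := h4.const_mul_atTop (by positivity : (0:ℝ) < 2 * Real.pi)
  apply h5.congr
  intro r
  rw [div_div, ← div_eq_mul_inv, mul_comm (r ^ w)]

end NotHolderAux

theorem not_holder_euclidean :
    (∀ w : ℝ, 0 < w →
      Filter.Tendsto (fun r : ℝ => (2 * Real.pi / Gmu r) / r ^ w)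
        (nhdsWithin 0 (Set.Ioi 0)) Filter.atTop) ∧
    (∀ w : ℝ, 0 < w →
      Filter.Tendsto (fun r : ℝ => r ^ w * Gmu r)
        (nhdsWithin 0 (Set.Ioi 0)) (nhds 0)) ∧
    ¬ ∃ C w : ℝ, 0 < C ∧ 0 < w ∧
      ∀ x : ℂ, x ≠ 0 → ‖x‖ < 1 →
        2 * Real.pi / Gmu (‖x‖) ≤ C * (‖x‖) ^ w := by
  refine ⟨NotHolderAux.part1, NotHolderAux.part2, ?_⟩
  rintro ⟨C, w, hC, hw, h⟩
  have h1 := NotHolderAux.part1 w hw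
  have hev : ∀ᶠ r in nhdsWithin (0:ℝ) (Set.Ioi 0),
      C < (2 * Real.pi / Gmu r) / r ^ w := h1.eventually_gt_atTop C
  have hev2 : ∀ᶠ r in nhdsWithin (0:ℝ) (Set.Ioi 0), r ∈ Set.Ioo (0:ℝ) 1 :=
    Ioo_mem_nhdsGT (by norm_num)
  obtain ⟨r, hgt, hr⟩ := (hev.and hev2).exists
  have hr0 := hr.1
  have hr1 := hr.2
  have habs : ‖(r : ℂ)‖ = r := by
    rw [Complex.norm_real, Real.norm_eq_abs, abs_of_pos hr0]
  have hx0 : (r : ℂ) ≠ 0 := by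
    simp only [ne_eq, Complex.ofReal_eq_zero]
    exact hr0.ne'
  have hx1 : ‖(r : ℂ)‖ < 1 := by rw [habs]; exact hr1
  have hle := h (r : ℂ) hx0 hx1
  rw [habs] at hle
  have hrw : (0:ℝ) < r ^ w := Real.rpow_pos_of_pos hr0 _
  rw [lt_div_iff₀ hrw] at hgt
  linarith
end

section
/- For every w > 0, the quotient (2π/μ(r))/(2·artanh r)^w tends to infinity as r → 0+. Consequently, the modulus metric of the unit disk is not Hölder continuous with respect to the hyperbolic metric: there exist no constants C > 0 and w > 0 such that 2π/μ(r) ≤ C·(2·artanh r)^w holds for all r ∈ (0, 1). -/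
open Real Filter Set

open MeasureTheory intervalIntegral

lemma rpow_neg_half (y : ℝ) (hy : 0 ≤ y) : y ^ (-(1:ℝ)/2) = 1 / Real.sqrt y := by
  rw [neg_div, Real.rpow_neg hy, Real.sqrt_eq_rpow]
  exact (one_div _).symm

lemma intble_one_sub_rpow :
    IntervalIntegrable (fun x : ℝ => (1 - x) ^ (-(1:ℝ)/2))
      volume 0 1 := by
  have h := ((intervalIntegral.intervalIntegrable_rpow' (a := 0) (b := 1) (r := -(1:ℝ)/2)
    (by norm_num)).comp_sub_left 1).symm
  simpa using h

lemma ellK_meas {k : ℝ} :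
    Measurable (fun x : ℝ => 1 / Real.sqrt ((1 - x ^ 2) * (1 - k ^ 2 * x ^ 2))) := by
  apply Measurable.div measurable_const
  exact (Real.continuous_sqrt.comp (by continuity)).measurable

lemma sqrt_prod_lower {k x : ℝ} (hk : k ^ 2 < 1) (hx0 : 0 ≤ x) (hx1 : x ≤ 1) :
    (1 - x) * (1 - k ^ 2) ≤ (1 - x ^ 2) * (1 - k ^ 2 * x ^ 2) := by
  have h2 : 1 - x ≤ 1 - x ^ 2 := by nlinarith
  have h3 : 1 - k ^ 2 ≤ 1 - k ^ 2 * x ^ 2 := by nlinarith [sq_nonneg (k*x), sq_nonneg k]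
  have := mul_le_mul h2 h3 (by linarith) (by nlinarith)
  linarith

lemma one_div_sqrt_mono {a b : ℝ} (ha : 0 ≤ a) (hab : a ≤ b) (h0 : a = 0 → b = 0) :
    1 / Real.sqrt b ≤ 1 / Real.sqrt a := by
  rcases eq_or_lt_of_le ha with h | h
  · rw [h0 h.symm, ← h]
  · exact one_div_le_one_div_of_le (Real.sqrt_pos.2 h) (Real.sqrt_le_sqrt hab)

lemma ellK_integrand_integrable {k : ℝ} (hk : k ^ 2 < 1) :
    IntervalIntegrable
      (fun x : ℝ => 1 / Real.sqrt ((1 - x ^ 2) * (1 - k ^ 2 * x ^ 2)))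
      volume 0 1 := by
  have hc : (0:ℝ) < 1 - k ^ 2 := by linarith
  apply ((intble_one_sub_rpow.const_mul ((1 - k ^ 2) ^ (-(1:ℝ)/2))).mono_fun
    (ellK_meas.aestronglyMeasurable) ?_)
  filter_upwards [MeasureTheory.ae_restrict_mem measurableSet_uIoc] with x hx
  rw [uIoc_of_le (by norm_num : (0:ℝ) ≤ 1)] at hx
  obtain ⟨hx0, hx1⟩ := hx
  have h1x : (0:ℝ) ≤ 1 - x := by linarith
  have key : 1 / Real.sqrt ((1 - x ^ 2) * (1 - k ^ 2 * x ^ 2)) ≤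
      (1 - k ^ 2) ^ (-(1:ℝ)/2) * (1 - x) ^ (-(1:ℝ)/2) := by
    rw [rpow_neg_half _ hc.le, rpow_neg_half _ h1x, div_mul_div_comm, one_mul,
      ← Real.sqrt_mul hc.le]
    calc 1 / Real.sqrt ((1 - x ^ 2) * (1 - k ^ 2 * x ^ 2))
        ≤ 1 / Real.sqrt ((1 - x) * (1 - k ^ 2)) := by
          apply one_div_sqrt_mono (by positivity) (sqrt_prod_lower hk hx0.le hx1)
          intro h
          have hx1' : x = 1 := by
            rcases mul_eq_zero.1 h with h' | h'
            · linarith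
            · linarith
          rw [hx1']; ring
      _ = 1 / Real.sqrt ((1 - k ^ 2) * (1 - x)) := by rw [mul_comm]
  rw [Real.norm_eq_abs, Real.norm_eq_abs, abs_of_nonneg (by positivity),
    abs_of_nonneg (by positivity)]
  exact key

lemma ellK_lower {k : ℝ} (hk : k ^ 2 < 1) : 1/2 ≤ ellK k := by
  have hI := ellK_integrand_integrable hk
  have hI1 : IntervalIntegrable
      (fun x : ℝ => 1 / Real.sqrt ((1 - x ^ 2) * (1 - k ^ 2 * x ^ 2)))
      volume 0 (1/2) := hI.mono_set (by
        rw [Set.uIcc_of_le, Set.uIcc_of_le] <;> norm_num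
        <;> exact fun x hx => ⟨hx.1, by linarith [hx.2]⟩)
  have hI2 : IntervalIntegrable
      (fun x : ℝ => 1 / Real.sqrt ((1 - x ^ 2) * (1 - k ^ 2 * x ^ 2)))
      volume (1/2) 1 := hI.mono_set (by
        rw [Set.uIcc_of_le, Set.uIcc_of_le] <;> norm_num
        <;> exact fun x hx => ⟨by linarith [hx.1], hx.2⟩)
  have hsplit : ellK k = (∫ x in (0:ℝ)..(1/2), 1 / Real.sqrt ((1 - x ^ 2) * (1 - k ^ 2 * x ^ 2)))
      + ∫ x in (1/2:ℝ)..1, 1 / Real.sqrt ((1 - x ^ 2) * (1 - k ^ 2 * x ^ 2)) :=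
    (intervalIntegral.integral_add_adjacent_intervals hI1 hI2).symm
  have h1 : (1/2:ℝ) ≤ ∫ x in (0:ℝ)..(1/2), 1 / Real.sqrt ((1 - x ^ 2) * (1 - k ^ 2 * x ^ 2)) := by
    have : ∫ x in (0:ℝ)..(1/2), (1:ℝ) ≤
        ∫ x in (0:ℝ)..(1/2), 1 / Real.sqrt ((1 - x ^ 2) * (1 - k ^ 2 * x ^ 2)) := by
      apply intervalIntegral.integral_mono_on (by norm_num) (by simp) hI1
      intro x hx
      have hx0 := hx.1
      have hx1 : x ≤ 1/2 := hx.2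
      have hp1 : (1 - x ^ 2) * (1 - k ^ 2 * x ^ 2) ≤ 1 := by
        have a1 : 1 - x ^ 2 ≤ 1 := by nlinarith
        have b0 : 0 ≤ 1 - k ^ 2 * x ^ 2 := by nlinarith [sq_nonneg (k*x)]
        have b1 : 1 - k ^ 2 * x ^ 2 ≤ 1 := by nlinarith [sq_nonneg (k*x)]
        exact mul_le_one₀ a1 b0 b1
      have hp0 : 0 < (1 - x ^ 2) * (1 - k ^ 2 * x ^ 2) := by
        nlinarith [sq_nonneg (k*x), sq_nonneg k]
      rw [le_div_iff₀ (Real.sqrt_pos.2 hp0), one_mul]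
      calc Real.sqrt ((1 - x ^ 2) * (1 - k ^ 2 * x ^ 2)) ≤ Real.sqrt 1 := Real.sqrt_le_sqrt hp1
        _ = 1 := Real.sqrt_one
    simpa using this
  have h2 : (0:ℝ) ≤ ∫ x in (1/2:ℝ)..1, 1 / Real.sqrt ((1 - x ^ 2) * (1 - k ^ 2 * x ^ 2)) := by
    apply intervalIntegral.integral_nonneg (by norm_num)
    intro x _; positivity
  linarith

lemma int_one_div_one_sub {a : ℝ} (h0 : 0 ≤ a) (h1 : a < 1) :
    ∫ x in (0:ℝ)..a, 1 / (1 - x) = Real.log (1/(1-a)) := by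
  have key := intervalIntegral.integral_comp_sub_left (a := 0) (b := a) (fun u => 1/u) 1
  rw [key, integral_one_div (by rw [Set.uIcc_of_le (by linarith)]; simp; linarith)]
  rw [show (1:ℝ) - 0 = 1 by ring]

lemma int_rpow_one_sub {a : ℝ} (h0 : 0 ≤ a) (h1 : a ≤ 1) :
    ∫ x in a..(1:ℝ), (1 - x) ^ (-(1:ℝ)/2) = 2 * Real.sqrt (1-a) := by
  have key := intervalIntegral.integral_comp_sub_left (a := a) (b := 1)
    (fun u => u ^ (-(1:ℝ)/2)) 1
  rw [key, integral_rpow (Or.inl (by norm_num))]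
  rw [show (1:ℝ) - 1 = 0 by ring, Real.zero_rpow (by norm_num)]
  rw [show (-(1:ℝ)/2 + 1) = 1/2 by ring, Real.sqrt_eq_rpow]
  ring

set_option maxHeartbeats 1000000 in
lemma ellK_upper {r : ℝ} (hr : 0 < r) (hr2 : r ≤ 1/2) :
    ellK (Real.sqrt (1 - r ^ 2)) ≤ -2 * Real.log r + 8/3 := by
  set k := Real.sqrt (1 - r ^ 2) with hkdef
  have hk2 : k ^ 2 = 1 - r ^ 2 := Real.sq_sqrt (by nlinarith)
  have hklt : k ^ 2 < 1 := by rw [hk2]; nlinarith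
  set f : ℝ → ℝ := fun x => 1 / Real.sqrt ((1 - x ^ 2) * (1 - k ^ 2 * x ^ 2)) with hfdef
  have ha0 : (0:ℝ) ≤ 1 - r ^ 2 := by nlinarith
  have ha1 : (1:ℝ) - r ^ 2 < 1 := by nlinarith
  have ha34 : (3/4:ℝ) ≤ 1 - r ^ 2 := by nlinarith
  have hI := ellK_integrand_integrable hklt
  have hsub1 : Set.uIcc (0:ℝ) (1 - r^2) ⊆ Set.uIcc (0:ℝ) 1 := by
    rw [Set.uIcc_of_le (by linarith), Set.uIcc_of_le (by norm_num)]
    exact Set.Icc_subset_Icc le_rfl ha1.le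
  have hsub2 : Set.uIcc (1 - r^2) (1:ℝ) ⊆ Set.uIcc (0:ℝ) 1 := by
    rw [Set.uIcc_of_le (by linarith), Set.uIcc_of_le (by norm_num)]
    exact Set.Icc_subset_Icc (by linarith) le_rfl
  have hI1 : IntervalIntegrable f volume 0 (1 - r^2) :=
    hI.mono_set hsub1
  have hI2 : IntervalIntegrable f volume (1 - r^2) 1 :=
    hI.mono_set hsub2
  have hsplit : ellK k = (∫ x in (0:ℝ)..(1 - r^2), f x) + ∫ x in (1 - r^2)..(1:ℝ), f x :=
    (intervalIntegral.integral_add_adjacent_intervals hI1 hI2).symm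
  have hP1 : (∫ x in (0:ℝ)..(1 - r^2), f x) ≤ -2 * Real.log r := by
    have hcont : IntervalIntegrable (fun x : ℝ => 1 / (1 - x))
        volume 0 (1 - r^2) := by
      apply ContinuousOn.intervalIntegrable
      apply ContinuousOn.div continuousOn_const (by fun_prop)
      intro x hx
      rw [Set.uIcc_of_le (by linarith)] at hx
      have := hx.2; intro h; nlinarith
    have hmono : (∫ x in (0:ℝ)..(1 - r^2), f x) ≤ ∫ x in (0:ℝ)..(1 - r^2), 1 / (1 - x) := by
      apply intervalIntegral.integral_mono_on (by linarith) hI1 hcont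
      intro x hx
      obtain ⟨hx0, hx1⟩ := hx
      have h1x : 0 < 1 - x := by nlinarith
      have hA : 1 - x ≤ 1 - x ^ 2 := by nlinarith [mul_nonneg hx0 h1x.le]
      have hB : 1 - x ^ 2 ≤ 1 - k ^ 2 * x ^ 2 := by
        rw [hk2]; nlinarith [sq_nonneg (r*x)]
      have hPl : (1 - x) ^ 2 ≤ (1 - x ^ 2) * (1 - k ^ 2 * x ^ 2) := by
        nlinarith [mul_le_mul hA (hA.trans hB) h1x.le (by linarith : (0:ℝ) ≤ 1 - x ^ 2)]
      have step : f x ≤ 1 / Real.sqrt ((1-x)^2) := by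
        apply one_div_sqrt_mono (by positivity) hPl
        intro h; exfalso; nlinarith [mul_pos h1x h1x]
      have heq : 1 / Real.sqrt ((1-x)^2) = 1 / (1 - x) := by rw [Real.sqrt_sq h1x.le]
      exact heq ▸ step
    rw [int_one_div_one_sub ha0 ha1,
      show (1:ℝ) - (1 - r^2) = r^2 by ring, one_div, Real.log_inv, Real.log_pow] at hmono
    push_cast at hmono
    linarith
  have hP2 : (∫ x in (1 - r^2)..(1:ℝ), f x) ≤ 8/3 := by
    have hgint : IntervalIntegrable
        (fun x : ℝ => (4/(3*r)) * (1 - x) ^ (-(1:ℝ)/2))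
        volume (1 - r^2) 1 := (intble_one_sub_rpow.mono_set hsub2).const_mul _
    have hmono : (∫ x in (1 - r^2)..(1:ℝ), f x) ≤
        ∫ x in (1 - r^2)..(1:ℝ), (4/(3*r)) * (1 - x) ^ (-(1:ℝ)/2) := by
      apply intervalIntegral.integral_mono_on (by linarith) hI2 hgint
      intro x hx
      obtain ⟨hx0, hx1⟩ := hx
      have hx34 : (3/4:ℝ) ≤ x := le_trans ha34 hx0
      have h1x : (0:ℝ) ≤ 1 - x := by linarith
      have hx2 : (9/16:ℝ) ≤ x ^ 2 := by nlinarith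
      have hA : 1 - x ≤ 1 - x ^ 2 := by nlinarith
      have hA0 : (0:ℝ) ≤ 1 - x ^ 2 := by nlinarith
      have hB : (9/16) * r ^ 2 ≤ 1 - k ^ 2 * x ^ 2 := by
        rw [hk2]
        nlinarith [mul_le_mul_of_nonneg_left hx2 (sq_nonneg r)]
      have hPl : (9/16) * r^2 * (1 - x) ≤ (1 - x ^ 2) * (1 - k ^ 2 * x ^ 2) := by
        rw [show (9/16) * r^2 * (1 - x) = (1-x) * ((9/16) * r^2) by ring]
        exact mul_le_mul hA hB (by positivity) hA0
      have step : f x ≤ 1 / Real.sqrt ((9/16) * r^2 * (1 - x)) := by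
        apply one_div_sqrt_mono (by positivity) hPl
        intro h
        have hx1' : x = 1 := by
          have : 1 - x = 0 := by
            by_contra hne
            have : 0 < 1 - x := lt_of_le_of_ne h1x (Ne.symm hne)
            nlinarith
          linarith
        rw [hx1']; ring
      have heq : 1 / Real.sqrt ((9/16) * r^2 * (1 - x)) = (4/(3*r)) * (1 - x) ^ (-(1:ℝ)/2) := by
        rw [rpow_neg_half _ h1x, Real.sqrt_mul (by positivity),
          show (9/16:ℝ) * r^2 = ((3/4)*r)^2 by ring, Real.sqrt_sq (by positivity)]
        rw [one_div ((3/4)*r * Real.sqrt (1-x)), mul_inv, one_div (Real.sqrt (1-x))]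
        congr 1
        rw [inv_eq_one_div]
        field_simp
      exact heq ▸ step
    rw [intervalIntegral.integral_const_mul,
      int_rpow_one_sub (by linarith) (by linarith)] at hmono
    rw [show (1:ℝ) - (1 - r^2) = r^2 by ring, Real.sqrt_sq hr.le] at hmono
    have : (4/(3*r)) * (2 * r) = 8/3 := by field_simp; ring
    linarith
  linarith


lemma artanh_pos {r : ℝ} (h0 : 0 < r) (h1 : r < 1) : 0 < _root_.artanh r := by
  have : (1:ℝ) < (1 + r) / (1 - r) := by
    rw [lt_div_iff₀ (by linarith)]; linarith
  have := Real.log_pos this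
  unfold _root_.artanh; linarith

lemma artanh_le {r : ℝ} (h0 : 0 < r) (h1 : r ≤ 1/2) : 2 * _root_.artanh r ≤ 4 * r := by
  have h1r : (0:ℝ) < 1 - r := by linarith
  have hlog1 : Real.log (1 + r) ≤ r := by
    have := Real.log_le_sub_one_of_pos (show (0:ℝ) < 1 + r by linarith)
    linarith
  have hlog2 : Real.log (1 - r) ≥ -2 * r := by
    have hinv : Real.log (1 - r) = -Real.log ((1 - r)⁻¹) := by rw [Real.log_inv]; ring
    have hpos : (0:ℝ) < (1 - r)⁻¹ := by positivity
    have hle : (1 - r)⁻¹ ≤ 1 + 2 * r := by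
      rw [inv_le_iff_one_le_mul₀ h1r]
      nlinarith
    have := Real.log_le_sub_one_of_pos hpos
    have h2 : Real.log ((1-r)⁻¹) ≤ 2 * r := by
      calc Real.log ((1-r)⁻¹) ≤ (1-r)⁻¹ - 1 := this
        _ ≤ 2 * r := by linarith
    linarith [hinv]
  have : 2 * _root_.artanh r = Real.log (1 + r) - Real.log (1 - r) := by
    unfold _root_.artanh
    rw [Real.log_div (by linarith) (by linarith)]
    ring
  linarith

lemma main_bound {r w : ℝ} (h0 : 0 < r) (h1 : r ≤ 1/2) (hw : 0 < w) :
    2 / ((-2 * Real.log r + 8/3) * (4*r) ^ w) ≤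
      (2 * Real.pi / Gmu r) / (2 * _root_.artanh r) ^ w := by
  set B : ℝ := -2 * Real.log r + 8/3 with hBdef
  have hlogneg : Real.log r < 0 := Real.log_neg h0 (by linarith)
  have hB : 0 < B := by simp only [hBdef]; linarith
  have hr2 : r ^ 2 < 1 := by nlinarith
  have hk2 : (Real.sqrt (1 - r ^ 2)) ^ 2 < 1 := by
    rw [Real.sq_sqrt (by nlinarith)]; nlinarith
  have hK : 1/2 ≤ ellK r := ellK_lower hr2
  have hK' : 1/2 ≤ ellK (Real.sqrt (1 - r ^ 2)) := ellK_lower hk2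
  have hKu : ellK (Real.sqrt (1 - r ^ 2)) ≤ B := ellK_upper h0 h1
  have hpi : (0:ℝ) < Real.pi := Real.pi_pos
  have hGpos : 0 < Gmu r := by
    unfold Gmu
    apply div_pos (by positivity) (by linarith)
  have hGle : Gmu r ≤ Real.pi * B := by
    unfold Gmu
    calc Real.pi / 2 * ellK (Real.sqrt (1 - r ^ 2)) / ellK r
        ≤ Real.pi / 2 * B / (1/2) := by
          apply div_le_div₀ (by positivity) _ (by norm_num) hK
          exact mul_le_mul_of_nonneg_left hKu (by positivity)
      _ = Real.pi * B := by ring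
  have hQ : 2 / B ≤ 2 * Real.pi / Gmu r := by
    calc (2:ℝ) / B = 2 * Real.pi / (Real.pi * B) := by
          field_simp
      _ ≤ 2 * Real.pi / Gmu r := by
          apply div_le_div_of_nonneg_left (by positivity) hGpos hGle
  have hat : 0 < 2 * _root_.artanh r := by linarith [artanh_pos h0 (by linarith : r < 1)]
  have hatw : (2 * _root_.artanh r) ^ w ≤ (4 * r) ^ w :=
    Real.rpow_le_rpow hat.le (artanh_le h0 h1) hw.le
  have hatwpos : 0 < (2 * _root_.artanh r) ^ w := Real.rpow_pos_of_pos hat w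
  calc 2 / (B * (4*r) ^ w) = (2 / B) / (4*r) ^ w := by rw [div_div]
    _ ≤ (2 / B) / (2 * _root_.artanh r) ^ w :=
        div_le_div_of_nonneg_left (by positivity) hatwpos hatw
    _ ≤ (2 * Real.pi / Gmu r) / (2 * _root_.artanh r) ^ w := by
        gcongr

lemma lb_tendsto {w : ℝ} (hw : 0 < w) :
    Tendsto (fun r : ℝ => 2 / ((-2 * Real.log r + 8/3) * (4*r) ^ w))
      (nhdsWithin 0 (Set.Ioi 0)) atTop := by
  have hD : Tendsto (fun r : ℝ => (-2 * Real.log r + 8/3) * (4*r) ^ w)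
      (nhdsWithin 0 (Set.Ioi 0)) (nhdsWithin 0 (Set.Ioi 0)) := by
    rw [tendsto_nhdsWithin_iff]
    constructor
    · have h1 : Tendsto (fun r : ℝ => Real.log r * r ^ w) (nhdsWithin 0 (Set.Ioi 0)) (nhds 0) :=
        tendsto_log_mul_rpow_nhdsGT_zero hw
      have h2 : Tendsto (fun r : ℝ => (4*r) ^ w) (nhdsWithin 0 (Set.Ioi 0)) (nhds 0) := by
        have hc : ContinuousAt (fun x : ℝ => x ^ w) 0 :=
          Real.continuousAt_rpow_const 0 w (Or.inr hw.le)
        have h4 : Tendsto (fun r : ℝ => 4*r) (nhdsWithin 0 (Set.Ioi 0)) (nhds 0) := by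
          have hcont : Continuous (fun r : ℝ => 4*r) := by continuity
          have := hcont.tendsto (0:ℝ)
          simp only [mul_zero] at this
          exact this.mono_left nhdsWithin_le_nhds
        have := hc.tendsto.comp h4
        rw [Real.zero_rpow hw.ne'] at this
        exact this
      have hcomb : Tendsto (fun r : ℝ => (-2 * (4:ℝ)^w) * (Real.log r * r ^ w)
          + (8/3) * ((4*r) ^ w)) (nhdsWithin 0 (Set.Ioi 0)) (nhds 0) := by
        have := (h1.const_mul (-2 * (4:ℝ)^w)).add (h2.const_mul (8/3))
        simpa using this
      apply hcomb.congr'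
      filter_upwards [self_mem_nhdsWithin] with r (hr : 0 < r)
      rw [Real.mul_rpow (by norm_num) hr.le]
      ring
    · filter_upwards [Ioo_mem_nhdsGT_of_mem (Set.left_mem_Ico.2 one_pos)] with r hr
      have hlog : Real.log r < 0 := Real.log_neg hr.1 hr.2
      have h4r : (0:ℝ) < 4*r := by linarith [hr.1]
      have : (0:ℝ) < (4*r) ^ w := Real.rpow_pos_of_pos h4r w
      exact mul_pos (by linarith) this
  have hinv := hD.inv_tendsto_nhdsGT_zero
  have := hinv.const_mul_atTop (show (0:ℝ) < 2 by norm_num)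
  apply this.congr
  intro r
  simp [div_eq_mul_inv]

theorem not_holder_hyperbolic :
    (∀ w : ℝ, 0 < w →
      Filter.Tendsto (fun r : ℝ => (2 * Real.pi / Gmu r) / (2 * _root_.artanh r) ^ w)
        (nhdsWithin 0 (Set.Ioi 0)) Filter.atTop) ∧
    ¬ ∃ C w : ℝ, 0 < C ∧ 0 < w ∧
      ∀ r : ℝ, 0 < r → r < 1 →
        2 * Real.pi / Gmu r ≤ C * (2 * _root_.artanh r) ^ w := by
  have part1 : ∀ w : ℝ, 0 < w →
      Filter.Tendsto (fun r : ℝ => (2 * Real.pi / Gmu r) / (2 * _root_.artanh r) ^ w)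
        (nhdsWithin 0 (Set.Ioi 0)) Filter.atTop := by
    intro w hw
    apply tendsto_atTop_mono' _ _ (lb_tendsto hw)
    filter_upwards [Ioo_mem_nhdsGT_of_mem
      (Set.left_mem_Ico.2 (by norm_num : (0:ℝ) < 1/2))] with r hr
    exact main_bound hr.1 hr.2.le hw
  refine ⟨part1, ?_⟩
  rintro ⟨C, w, hC, hw, h⟩
  have h1 := (part1 w hw).eventually_ge_atTop (C+1)
  have h2 : ∀ᶠ r in nhdsWithin (0:ℝ) (Set.Ioi 0), r ∈ Set.Ioo (0:ℝ) 1 :=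
    eventually_of_mem (Ioo_mem_nhdsGT_of_mem (Set.left_mem_Ico.2 one_pos)) (fun x hx => hx)
  obtain ⟨r, hr1, hr2⟩ := (h1.and h2).exists
  have hat := artanh_pos hr2.1 hr2.2
  have hpow : 0 < (2 * _root_.artanh r) ^ w := Real.rpow_pos_of_pos (by linarith) w
  have hle := h r hr2.1 hr2.2
  have : (2 * Real.pi / Gmu r) / (2 * _root_.artanh r) ^ w ≤ C := by
    rw [div_le_iff₀ hpow]; exact hle
  linarith
end
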